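/- arXiv:1505.06098 — 4 statements merged into one kernel-verified Lean document; each statement's English description precedes it below -/
import Mathlib

section
/- For n ≥ 2 and k ≥ 1, the number b_{n,k} of symmetric tree-like tableaux of size 2n+1 with exactly 2k occupied corners satisfies 2k·b_{n,k} = 2·(2k·b_{n-1,k} + (n - 2(k-1))·b_{n-1,k-1}). -/
open Finset Polynomial

/-- A tree-like tableau: a Young diagram together with a set of pointed cells,
such that the top-left cell is pointed (the root point), every non-root point
has a point above it in its column or to its left in its row but not both,
and no row or column of the diagram is empty of points. Cells are indexed by
`(row, column)` with the top-left cell `(0,0)`. -/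
structure TreeLikeTableau where
  shape : YoungDiagram
  points : Finset (ℕ × ℕ)
  points_subset : points ⊆ shape.cells
  root_mem : (0, 0) ∈ points
  point_cond : ∀ p ∈ points, p ≠ (0, 0) →
    Xor' (∃ r < p.1, (r, p.2) ∈ points) (∃ c < p.2, (p.1, c) ∈ points)
  no_empty_row : ∀ i j : ℕ, (i, j) ∈ shape.cells → ∃ c, (i, c) ∈ points
  no_empty_col : ∀ i j : ℕ, (i, j) ∈ shape.cells → ∃ r, (r, j) ∈ points

namespace TreeLikeTableau

/-- The size of a tree-like tableau is its number of points. -/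
def size (T : TreeLikeTableau) : ℕ := T.points.card

/-- The occupied corners of a tree-like tableau: pointed cells whose bottom
and right edges lie on the Southeast border of the diagram. -/
def occCorners (T : TreeLikeTableau) : Finset (ℕ × ℕ) :=
  T.points.filter (fun p => (p.1 + 1, p.2) ∉ T.shape.cells ∧ (p.1, p.2 + 1) ∉ T.shape.cells)

/-- The number of occupied corners. -/
def oc (T : TreeLikeTableau) : ℕ := T.occCorners.card

end TreeLikeTableau

/-- A tree-like tableau is symmetric if it is invariant under reflection
across its main diagonal. -/
def TreeLikeTableau.IsSymmetric (T : TreeLikeTableau) : Prop :=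
  T.shape.transpose = T.shape ∧ ∀ p : ℕ × ℕ, p ∈ T.points ↔ (p.2, p.1) ∈ T.points

/-- `b n k` is the number of symmetric tree-like tableaux of size `2n+1` with
exactly `2k` occupied corners. -/
noncomputable def b (n k : ℕ) : ℕ :=
  Set.ncard {T : TreeLikeTableau | T.size = 2 * n + 1 ∧ T.IsSymmetric ∧ T.oc = 2 * k}

namespace TLTaux

/-- shift inserting a gap at `m` -/
def fI (m i : ℕ) : ℕ := if i < m then i else i + 1
/-- collapse removing index `m` -/
def fD (m i : ℕ) : ℕ := if i < m then i else i - 1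

lemma fI_ne (m i : ℕ) : fI m i ≠ m := by
  unfold fI; split <;> omega

lemma fD_fI (m i : ℕ) : fD m (fI m i) = i := by
  unfold fI fD; split <;> (try split) <;> omega

lemma fI_fD {m i : ℕ} (h : i ≠ m) : fI m (fD m i) = i := by
  unfold fI fD; split <;> (try split) <;> omega

lemma fI_lt_iff {m a b : ℕ} : fI m a < fI m b ↔ a < b := by
  unfold fI; split <;> (try split) <;> omega

lemma fI_inj {m a b : ℕ} (h : fI m a = fI m b) : a = b := by
  unfold fI at h; split at h <;> (try split at h) <;> omega

lemma fD_mono {m a b : ℕ} (h : a ≤ b) : fD m a ≤ fD m b := by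
  unfold fD; split <;> (try split) <;> omega

lemma fD_lt_fD {m a b : ℕ} (ha : a ≠ m) (hb : b ≠ m) (h : a < b) : fD m a < fD m b := by
  unfold fD; split <;> (try split) <;> omega

lemma fI_zero {m : ℕ} (hm : 1 ≤ m) : fI m 0 = 0 := by
  unfold fI; split <;> omega

/-- Finset insertion of a row `m` and column `m` of length `q+1`. -/
def insF (m q : ℕ) (F : Finset (ℕ × ℕ)) : Finset (ℕ × ℕ) :=
  F.image (fun p => (fI m p.1, fI m p.2)) ∪
    (range (q + 1)).image (fun t => (m, t)) ∪
    (range (q + 1)).image (fun t => (t, m))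

lemma mem_insF {m q : ℕ} {F : Finset (ℕ × ℕ)} {i j : ℕ} :
    (i, j) ∈ insF m q F ↔
      (i = m ∧ j ≤ q) ∨ (j = m ∧ i ≤ q) ∨
        (i ≠ m ∧ j ≠ m ∧ (fD m i, fD m j) ∈ F) := by
  unfold insF
  simp only [mem_union, mem_image, mem_range, Prod.mk.injEq]
  constructor
  · rintro (((⟨⟨a, b⟩, hab, h1, h2⟩ | ⟨t, ht, h1, h2⟩) | ⟨t, ht, h1, h2⟩))
    · subst h1; subst h2
      exact Or.inr (Or.inr ⟨fI_ne m a, fI_ne m b, by rw [fD_fI, fD_fI]; exact hab⟩)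
    · exact Or.inl ⟨h1.symm, by omega⟩
    · exact Or.inr (Or.inl ⟨h2.symm, by omega⟩)
  · rintro (⟨h1, h2⟩ | ⟨h1, h2⟩ | ⟨h1, h2, h3⟩)
    · exact Or.inl (Or.inr ⟨j, by omega, h1.symm, rfl⟩)
    · exact Or.inr ⟨i, by omega, rfl, h1.symm⟩
    · exact Or.inl (Or.inl ⟨(fD m i, fD m j), h3, by rw [fI_fD h1], by rw [fI_fD h2]⟩)

/-- Finset deletion of row `m` and column `m`. -/
def delF (m : ℕ) (F : Finset (ℕ × ℕ)) : Finset (ℕ × ℕ) :=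
  (F.filter (fun p => p.1 ≠ m ∧ p.2 ≠ m)).image (fun p => (fD m p.1, fD m p.2))

lemma mem_delF {m : ℕ} {F : Finset (ℕ × ℕ)} {i j : ℕ} :
    (i, j) ∈ delF m F ↔ (fI m i, fI m j) ∈ F := by
  unfold delF
  simp only [mem_image, mem_filter, Prod.mk.injEq]
  constructor
  · rintro ⟨⟨a, b⟩, ⟨hab, ha, hb⟩, h1, h2⟩
    subst h1; subst h2
    rwa [fI_fD ha, fI_fD hb]
  · intro h
    exact ⟨(fI m i, fI m j), ⟨h, fI_ne m i, fI_ne m j⟩, by rw [fD_fI], by rw [fD_fI]⟩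

lemma delF_insF (m q : ℕ) (F : Finset (ℕ × ℕ)) : delF m (insF m q F) = F := by
  ext ⟨i, j⟩
  rw [mem_delF, mem_insF]
  have hi := fI_ne m i; have hj := fI_ne m j
  rw [fD_fI, fD_fI]
  tauto

lemma insF_delF {m q : ℕ} {F : Finset (ℕ × ℕ)}
    (hrow : ∀ t, (m, t) ∈ F ↔ t ≤ q) (hcol : ∀ t, (t, m) ∈ F ↔ t ≤ q) :
    insF m q (delF m F) = F := by
  ext ⟨i, j⟩
  rw [mem_insF]
  constructor
  · rintro (⟨h1, h2⟩ | ⟨h1, h2⟩ | ⟨h1, h2, h3⟩)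
    · subst h1; exact (hrow j).2 h2
    · subst h1; exact (hcol i).2 h2
    · rw [mem_delF, fI_fD h1, fI_fD h2] at h3; exact h3
  · intro h
    by_cases hi : i = m
    · exact Or.inl ⟨hi, (hrow j).1 (hi ▸ h)⟩
    by_cases hj : j = m
    · exact Or.inr (Or.inl ⟨hj, (hcol i).1 (hj ▸ h)⟩)
    · exact Or.inr (Or.inr ⟨hi, hj, by rw [mem_delF, fI_fD hi, fI_fD hj]; exact h⟩)

end TLTaux

namespace TLTaux
lemma fI_mono {m a b : ℕ} (h : a ≤ b) : fI m a ≤ fI m b := by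
  unfold fI; split <;> (try split) <;> omega
lemma fI_eq_zero {m a : ℕ} (h : fI m a = 0) : a = 0 := by
  unfold fI at h; split at h <;> omega
end TLTaux

namespace TreeLikeTableau

attribute [local instance] Classical.propDecidable

lemma ext' {T₁ T₂ : TreeLikeTableau} (hs : T₁.shape = T₂.shape)
    (hp : T₁.points = T₂.points) : T₁ = T₂ := by
  cases T₁; cases T₂; simp_all

variable (T : TreeLikeTableau)

lemma points_mem_shape {p : ℕ × ℕ} (hp : p ∈ T.points) : p ∈ T.shape :=
  (YoungDiagram.mem_cells p).1 (T.points_subset hp)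

lemma mem_shape_swap (hsym : T.IsSymmetric) {i j : ℕ} :
    (i, j) ∈ T.shape ↔ (j, i) ∈ T.shape := by
  conv_lhs => rw [← hsym.1]
  exact YoungDiagram.mem_transpose

lemma rowLen_eq_colLen (hsym : T.IsSymmetric) (j : ℕ) :
    T.shape.rowLen j = T.shape.colLen j := by
  rw [← YoungDiagram.colLen_transpose T.shape j, hsym.1]

/-- points with no point above them in their column -/
noncomputable def TP : Finset (ℕ × ℕ) :=
  T.points.filter (fun p => ∀ r < p.1, (r, p.2) ∉ T.points)

/-- points with no point to their left in their row -/
noncomputable def LP : Finset (ℕ × ℕ) :=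
  T.points.filter (fun p => ∀ c < p.2, (p.1, c) ∉ T.points)

lemma card_TP : T.TP.card = T.shape.rowLen 0 := by
  rw [show T.shape.rowLen 0 = (range (T.shape.rowLen 0)).card by simp]
  apply Finset.card_bij (fun p _ => p.2)
  · rintro ⟨a, b⟩ hp
    simp only [TP, mem_filter] at hp
    simp only [mem_range, ← YoungDiagram.mem_iff_lt_rowLen]
    exact T.shape.up_left_mem (Nat.zero_le a) le_rfl (T.points_mem_shape hp.1)
  · rintro ⟨a, b⟩ ha ⟨a', b'⟩ hb (h : b = b')
    simp only [TP, mem_filter] at ha hb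
    subst h
    rcases lt_trichotomy a a' with h | h | h
    · exact absurd ha.1 (hb.2 a h)
    · rw [h]
    · exact absurd hb.1 (ha.2 a' h)
  · intro b hb
    simp only [mem_range, ← YoungDiagram.mem_iff_lt_rowLen] at hb
    have hex : ∃ r, (r, b) ∈ T.points := T.no_empty_col 0 b ((YoungDiagram.mem_cells _).2 hb)
    refine ⟨(Nat.find hex, b), ?_, rfl⟩
    simp only [TP, mem_filter]
    exact ⟨Nat.find_spec hex, fun r hr => Nat.find_min hex hr⟩

lemma card_LP : T.LP.card = T.shape.colLen 0 := by
  rw [show T.shape.colLen 0 = (range (T.shape.colLen 0)).card by simp]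
  apply Finset.card_bij (fun p _ => p.1)
  · rintro ⟨a, b⟩ hp
    simp only [LP, mem_filter] at hp
    simp only [mem_range, ← YoungDiagram.mem_iff_lt_colLen]
    exact T.shape.up_left_mem le_rfl (Nat.zero_le b) (T.points_mem_shape hp.1)
  · rintro ⟨a, b⟩ ha ⟨a', b'⟩ hb (h : a = a')
    simp only [LP, mem_filter] at ha hb
    subst h
    rcases lt_trichotomy b b' with h | h | h
    · exact absurd ha.1 (hb.2 b h)
    · rw [h]
    · exact absurd hb.1 (ha.2 b' h)
  · intro a ha
    simp only [mem_range, ← YoungDiagram.mem_iff_lt_colLen] at ha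
    have hex' : ∃ c, (a, c) ∈ T.points := T.no_empty_row a 0 ((YoungDiagram.mem_cells _).2 ha)
    refine ⟨(a, Nat.find hex'), ?_, rfl⟩
    simp only [LP, mem_filter]
    exact ⟨Nat.find_spec hex', fun c hc => Nat.find_min hex' hc⟩

lemma TP_union_LP : T.TP ∪ T.LP = T.points := by
  apply Finset.Subset.antisymm
  · exact Finset.union_subset (filter_subset _ _) (filter_subset _ _)
  · intro p hp
    by_cases hroot : p = (0, 0)
    · subst hroot
      simp only [mem_union, TP, mem_filter]
      exact Or.inl ⟨hp, fun r hr => absurd hr (Nat.not_lt_zero r)⟩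
    · rcases T.point_cond p hp hroot with ⟨ha, hl⟩ | ⟨hl, ha⟩
      · simp only [mem_union, LP, mem_filter]
        exact Or.inr ⟨hp, fun c hc h => hl ⟨c, hc, h⟩⟩
      · simp only [mem_union, TP, mem_filter]
        exact Or.inl ⟨hp, fun r hr h => ha ⟨r, hr, h⟩⟩

lemma TP_inter_LP : T.TP ∩ T.LP = {(0, 0)} := by
  ext p
  simp only [mem_inter, mem_singleton, TP, LP, mem_filter]
  constructor
  · rintro ⟨⟨hp, ha⟩, ⟨_, hl⟩⟩
    by_contra hroot
    rcases T.point_cond p hp hroot with ⟨⟨r, hr, h⟩, _⟩ | ⟨⟨c, hc, h⟩, _⟩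
    · exact ha r hr h
    · exact hl c hc h
  · rintro rfl
    exact ⟨⟨T.root_mem, fun r hr => absurd hr (Nat.not_lt_zero r)⟩,
      ⟨T.root_mem, fun c hc => absurd hc (Nat.not_lt_zero c)⟩⟩

lemma half_perimeter :
    T.shape.rowLen 0 + T.shape.colLen 0 = T.points.card + 1 := by
  have h := Finset.card_union_add_card_inter T.TP T.LP
  rw [TP_union_LP, TP_inter_LP, card_singleton] at h
  rw [← card_TP, ← card_LP, h]

lemma no_diag_point (hsym : T.IsSymmetric) {i : ℕ} (hi : i ≠ 0) :
    (i, i) ∉ T.points := by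
  intro hp
  rcases T.point_cond (i, i) hp (by simp [hi]) with ⟨⟨r, hr, h⟩, hl⟩ | ⟨⟨c, hc, h⟩, ha⟩
  · exact hl ⟨r, hr, (hsym.2 (r, i)).1 h⟩
  · exact ha ⟨c, hc, (hsym.2 (i, c)).1 h⟩

lemma root_not_corner (hcard : 2 ≤ T.points.card) : (0, 0) ∉ T.occCorners := by
  intro h
  simp only [occCorners, mem_filter] at h
  obtain ⟨-, h1, h2⟩ := h
  have hsub : T.points ⊆ {(0, 0)} := by
    rintro ⟨a, b⟩ hp
    have hab := T.points_mem_shape hp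
    rcases Nat.eq_zero_or_pos a with rfl | ha
    · rcases Nat.eq_zero_or_pos b with rfl | hb
      · simp
      · exact absurd ((YoungDiagram.mem_cells _).2
          (T.shape.up_left_mem le_rfl hb hab)) h2
    · exact absurd ((YoungDiagram.mem_cells _).2
        (T.shape.up_left_mem ha (Nat.zero_le b) hab)) h1
  have := Finset.card_le_card hsub
  simp at this; omega

lemma occC_subset_points : T.occCorners ⊆ T.points := filter_subset _ _

lemma occC_no_diag (hsym : T.IsSymmetric) (hcard : 2 ≤ T.points.card) (i : ℕ) :
    (i, i) ∉ T.occCorners := by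
  intro h
  rcases Nat.eq_zero_or_pos i with rfl | hi
  · exact T.root_not_corner hcard h
  · exact T.no_diag_point hsym (by omega) (T.occC_subset_points h)

lemma occC_swap (hsym : T.IsSymmetric) {i j : ℕ} :
    (i, j) ∈ T.occCorners ↔ (j, i) ∈ T.occCorners := by
  simp only [occCorners, mem_filter]
  rw [← hsym.2 (i, j)]
  constructor
  · rintro ⟨hp, h1, h2⟩
    refine ⟨hp, fun hc => h2 ?_, fun hc => h1 ?_⟩
    · rw [YoungDiagram.mem_cells] at hc ⊢
      exact (T.mem_shape_swap hsym).1 hc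
    · rw [YoungDiagram.mem_cells] at hc ⊢
      exact (T.mem_shape_swap hsym).1 hc
  · rintro ⟨hp, h1, h2⟩
    refine ⟨hp, fun hc => h2 ?_, fun hc => h1 ?_⟩
    · rw [YoungDiagram.mem_cells] at hc ⊢
      exact (T.mem_shape_swap hsym).1 hc
    · rw [YoungDiagram.mem_cells] at hc ⊢
      exact (T.mem_shape_swap hsym).1 hc

/-- occupied corners whose point has a point above it (one per mirror-pair) -/
noncomputable def AC : Finset (ℕ × ℕ) :=
  T.occCorners.filter (fun p => ∃ r < p.1, (r, p.2) ∈ T.points)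

lemma occC_eq_AC_union (hsym : T.IsSymmetric) (hcard : 2 ≤ T.points.card) :
    T.occCorners = T.AC ∪ T.AC.image Prod.swap := by
  apply Finset.Subset.antisymm
  · rintro ⟨i, j⟩ hp
    have hpt : (i, j) ∈ T.points := T.occC_subset_points hp
    have hroot : (i, j) ≠ (0, 0) := fun h => T.root_not_corner hcard (h ▸ hp)
    rcases T.point_cond _ hpt hroot with ⟨ha, hl⟩ | ⟨hl, ha⟩
    · exact Finset.mem_union_left _ (mem_filter.2 ⟨hp, ha⟩)
    · apply Finset.mem_union_right
      refine Finset.mem_image.2 ⟨(j, i), mem_filter.2 ⟨(T.occC_swap hsym).1 hp, ?_⟩, rfl⟩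
      obtain ⟨c, hc, h⟩ := hl
      exact ⟨c, hc, (hsym.2 (i, c)).1 h⟩
  · apply Finset.union_subset (filter_subset _ _)
    rintro p hp
    obtain ⟨⟨a, b⟩, hab, rfl⟩ := Finset.mem_image.1 hp
    exact (T.occC_swap hsym).1 (mem_filter.1 hab).1

lemma disjoint_AC_swap (hsym : T.IsSymmetric) (hcard : 2 ≤ T.points.card) :
    Disjoint T.AC (T.AC.image Prod.swap) := by
  rw [Finset.disjoint_left]
  rintro ⟨i, j⟩ h1 h2
  obtain ⟨p, hp, heq⟩ := Finset.mem_image.1 h2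
  have hji : (j, i) ∈ T.AC := by
    have : p = (j, i) := Prod.swap_injective (by simpa using heq)
    rwa [this] at hp
  simp only [AC, mem_filter] at h1 hji
  have hpt : (i, j) ∈ T.points := T.occC_subset_points h1.1
  have hroot : (i, j) ≠ (0, 0) := fun h => T.root_not_corner hcard (h ▸ h1.1)
  obtain ⟨r, hr, h⟩ := hji.2
  have hleft : ∃ c < j, (i, c) ∈ T.points := ⟨r, hr, (hsym.2 (r, i)).1 h⟩
  rcases T.point_cond _ hpt hroot with ⟨_, hl⟩ | ⟨_, ha⟩
  · exact hl hleft
  · exact ha h1.2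

lemma card_occC_eq_two_mul (hsym : T.IsSymmetric) (hcard : 2 ≤ T.points.card) :
    T.occCorners.card = 2 * T.AC.card := by
  rw [T.occC_eq_AC_union hsym hcard,
    Finset.card_union_of_disjoint (T.disjoint_AC_swap hsym hcard),
    Finset.card_image_of_injective _ Prod.swap_injective]
  ring

end TreeLikeTableau


namespace TLTaux

open TreeLikeTableau

attribute [local instance] Classical.propDecidable

/-- index of inserted row/column -/
noncomputable def M (T : TreeLikeTableau) (col : ℕ) : ℕ := T.shape.colLen col
/-- (length - 1) of inserted row/column -/
noncomputable def Q (T : TreeLikeTableau) (col : ℕ) : ℕ := if col < M T col then col else col + 1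

variable {T : TreeLikeTableau} {col : ℕ}

section Facts

lemma hM1 (hcol : (0, col) ∈ T.shape) : 1 ≤ M T col := YoungDiagram.mem_iff_lt_colLen.1 hcol

lemma hQ_cases : (Q T col = col ∧ col < M T col) ∨ (Q T col = col + 1 ∧ M T col ≤ col) := by
  unfold Q; split
  · exact Or.inl ⟨rfl, by assumption⟩
  · exact Or.inr ⟨rfl, by omega⟩

lemma hColQ : col ≤ Q T col := by unfold Q; split <;> omega

lemma hQcol1 : Q T col ≤ col + 1 := by unfold Q; split <;> omega

lemma hQM : Q T col ≠ M T col := by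
  rcases hQ_cases (T := T) (col := col) with ⟨h1, h2⟩ | ⟨h1, h2⟩ <;> omega

lemma fD_Q : fD (M T col) (Q T col) = col := by
  rcases hQ_cases (T := T) (col := col) with ⟨h1, h2⟩ | ⟨h1, h2⟩ <;> unfold fD <;> split <;> omega

lemma fI_col : fI (M T col) col = Q T col := by
  rcases hQ_cases (T := T) (col := col) with ⟨h1, h2⟩ | ⟨h1, h2⟩ <;> unfold fI <;> split <;> omega

lemma K1 {i : ℕ} : (i, col) ∈ T.shape ↔ i < M T col := YoungDiagram.mem_iff_lt_colLen

lemma K2 (hsym : T.IsSymmetric) {j : ℕ} : (col, j) ∈ T.shape ↔ j < M T col := by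
  rw [YoungDiagram.mem_iff_lt_rowLen, T.rowLen_eq_colLen hsym]; rfl

/-- anti-monotonicity: a cell in row `≥ M` forces its column to be left of `col` -/
lemma col_lt_of_deep {a b : ℕ} (hab : (a, b) ∈ T.shape) (ha : M T col ≤ a) : b < col := by
  by_contra h
  have h1 : T.shape.colLen b ≤ M T col := by
    exact (T.shape.colLen_anti col b (by omega)).trans le_rfl
  have h2 : a < T.shape.colLen b := YoungDiagram.mem_iff_lt_colLen.1 hab
  omega

/-- rows `0..col` of the shape are nonempty -/
lemma row_le_col_nonempty (hsym : T.IsSymmetric) (hcol : (0, col) ∈ T.shape) {r : ℕ}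
    (hr : r ≤ col) : (r, 0) ∈ T.shape :=
  T.shape.up_left_mem hr le_rfl ((T.mem_shape_swap hsym).1 hcol)

end Facts

/-- the cells of the inserted shape -/
noncomputable def insCells (T : TreeLikeTableau) (col : ℕ) : Finset (ℕ × ℕ) :=
  insF (M T col) (Q T col) T.shape.cells

lemma mem_insCells {i j : ℕ} :
    (i, j) ∈ insCells T col ↔
      (i = M T col ∧ j ≤ Q T col) ∨ (j = M T col ∧ i ≤ Q T col) ∨
        (i ≠ M T col ∧ j ≠ M T col ∧ (fD (M T col) i, fD (M T col) j) ∈ T.shape) := by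
  unfold insCells
  rw [mem_insF]
  simp [YoungDiagram.mem_cells]

lemma insCells_lower (hsym : T.IsSymmetric) (hcol : (0, col) ∈ T.shape) :
    IsLowerSet (insCells T col : Set (ℕ × ℕ)) := by
  rintro ⟨i2, j2⟩ ⟨i1, j1⟩ ⟨(h1 : i1 ≤ i2), (h2 : j1 ≤ j2)⟩ hmem
  simp only [Finset.mem_coe] at hmem ⊢
  set m := M T col with hm
  set q := Q T col with hq
  have hm1 : 1 ≤ m := hM1 hcol
  have hqc := hQ_cases (T := T) (col := col)
  rw [mem_insCells] at hmem ⊢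
  rcases hmem with ⟨hi2, hj2⟩ | ⟨hj2, hi2⟩ | ⟨hi2, hj2, hmem⟩
  · -- row m
    subst hi2
    by_cases hi1 : i1 = m
    · exact Or.inl ⟨hi1, by omega⟩
    have hi1m : i1 < m := by omega
    by_cases hj1 : j1 = m
    · refine Or.inr (Or.inl ⟨hj1, ?_⟩)
      rcases hqc with ⟨e1, e2⟩ | ⟨e1, e2⟩ <;> omega
    · refine Or.inr (Or.inr ⟨hi1, hj1, ?_⟩)
      have hfd1 : fD m i1 = i1 := by unfold fD; split <;> omega
      have hfdj : fD m j1 ≤ col := by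
        unfold fD; rcases hqc with ⟨e1, e2⟩ | ⟨e1, e2⟩ <;> split <;> omega
      rw [hfd1]
      have : i1 < T.shape.colLen (fD m j1) := by
        have := T.shape.colLen_anti (fD m j1) col hfdj
        have : T.shape.colLen col = m := rfl
        omega
      exact YoungDiagram.mem_iff_lt_colLen.2 this
  · -- col m
    subst hj2
    by_cases hj1 : j1 = m
    · exact Or.inr (Or.inl ⟨hj1, by omega⟩)
    have hj1m : j1 < m := by omega
    by_cases hi1 : i1 = m
    · refine Or.inl ⟨hi1, ?_⟩
      rcases hqc with ⟨e1, e2⟩ | ⟨e1, e2⟩ <;> omega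
    · refine Or.inr (Or.inr ⟨hi1, hj1, ?_⟩)
      have hfd1 : fD m j1 = j1 := by unfold fD; split <;> omega
      have hfdi : fD m i1 ≤ col := by
        unfold fD; rcases hqc with ⟨e1, e2⟩ | ⟨e1, e2⟩ <;> split <;> omega
      rw [hfd1]
      rw [T.mem_shape_swap hsym]
      have : j1 < T.shape.colLen (fD m i1) := by
        have := T.shape.colLen_anti (fD m i1) col hfdi
        have : T.shape.colLen col = m := rfl
        omega
      exact YoungDiagram.mem_iff_lt_colLen.2 this
  · -- generic
    by_cases hi1 : i1 = m
    · refine Or.inl ⟨hi1, ?_⟩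
      have hi2m : m < i2 := by omega
      have hdeep : (fD m i2, fD m j2) ∈ T.shape := hmem
      have hfd2 : fD m i2 = i2 - 1 := by unfold fD; split <;> omega
      have : fD m j2 < col := by
        apply col_lt_of_deep (col := col) hmem
        unfold fD; split <;> omega
      have hj2c : j2 ≤ col := by unfold fD at this; split at this <;> omega
      have := hColQ (T := T) (col := col)
      omega
    by_cases hj1 : j1 = m
    · refine Or.inr (Or.inl ⟨hj1, ?_⟩)
      have hj2m : m < j2 := by omega
      have hswap : (fD m j2, fD m i2) ∈ T.shape := (T.mem_shape_swap hsym).1 hmem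
      have : fD m i2 < col := by
        apply col_lt_of_deep (col := col) hswap
        unfold fD; split <;> omega
      have hi2c : i2 ≤ col := by unfold fD at this; split at this <;> omega
      have := hColQ (T := T) (col := col)
      omega
    · exact Or.inr (Or.inr ⟨hi1, hj1,
        T.shape.isLowerSet ⟨fD_mono h1, fD_mono h2⟩ hmem⟩)

/-- the inserted shape -/
noncomputable def insShape (hsym : T.IsSymmetric) (hcol : (0, col) ∈ T.shape) : YoungDiagram :=
  ⟨insCells T col, insCells_lower hsym hcol⟩

/-- the points of the inserted tableau -/
noncomputable def insP (T : TreeLikeTableau) (col : ℕ) : Finset (ℕ × ℕ) :=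
  T.points.image (fun p => (fI (M T col) p.1, fI (M T col) p.2)) ∪
    {(M T col, Q T col), (Q T col, M T col)}

lemma mem_insP {p : ℕ × ℕ} :
    p ∈ insP T col ↔
      (∃ a ∈ T.points, (fI (M T col) a.1, fI (M T col) a.2) = p) ∨
        p = (M T col, Q T col) ∨ p = (Q T col, M T col) := by
  unfold insP
  simp only [Finset.mem_union, Finset.mem_image, Finset.mem_insert, Finset.mem_singleton]

lemma insP_row_m {y : ℕ} :
    (M T col, y) ∈ insP T col ↔ y = Q T col := by
  rw [mem_insP]
  constructor
  · rintro (⟨a, _, heq⟩ | heq | heq)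
    · exact absurd (congrArg Prod.fst heq) (by simpa using fI_ne (M T col) a.1)
    · simpa using congrArg Prod.snd heq
    · have := hQM (T := T) (col := col)
      have h1 := congrArg Prod.fst heq
      simp only at h1
      omega
  · rintro rfl; exact Or.inr (Or.inl rfl)

lemma insP_col_m {x : ℕ} :
    (x, M T col) ∈ insP T col ↔ x = Q T col := by
  rw [mem_insP]
  constructor
  · rintro (⟨a, _, heq⟩ | heq | heq)
    · exact absurd (congrArg Prod.snd heq) (by simpa using fI_ne (M T col) a.2)
    · have := hQM (T := T) (col := col)
      have h1 := congrArg Prod.snd heq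
      simp only at h1
      omega
    · simpa using congrArg Prod.fst heq
  · rintro rfl; exact Or.inr (Or.inr rfl)

lemma insP_gen {x y : ℕ} (hx : x ≠ M T col) (hy : y ≠ M T col) :
    ((x, y) ∈ insP T col ↔ (fD (M T col) x, fD (M T col) y) ∈ T.points) := by
  rw [mem_insP]
  constructor
  · rintro (⟨a, ha, heq⟩ | heq | heq)
    · obtain ⟨h1, h2⟩ := Prod.mk.injEq .. ▸ heq
      rw [← h1, ← h2, fD_fI, fD_fI]
      exact (by simpa using ha)
    · exact absurd (congrArg Prod.fst heq) (by simpa using hx)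
    · exact absurd (congrArg Prod.snd heq) (by simpa using hy)
  · intro h
    exact Or.inl ⟨(fD (M T col) x, fD (M T col) y), h, by rw [fI_fD hx, fI_fD hy]⟩

end TLTaux


namespace TLTaux

open TreeLikeTableau

attribute [local instance] Classical.propDecidable

variable {T : TreeLikeTableau} {col : ℕ}

lemma xor'_congr {a b c d : Prop} (h1 : a ↔ c) (h2 : b ↔ d) : Xor' a b ↔ Xor' c d := by
  unfold Xor'; rw [h1, h2]

lemma W_vert (hcol : (0, col) ∈ T.shape) {a : ℕ × ℕ} (ha : a ∈ T.points) :
    (∃ r < fI (M T col) a.1, (r, fI (M T col) a.2) ∈ insP T col) ↔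
      (∃ r < a.1, (r, a.2) ∈ T.points) := by
  constructor
  · rintro ⟨r, hr, hmem⟩
    rcases (mem_insP).1 hmem with ⟨a', ha', heq⟩ | heq | heq
    · have h1 : fI (M T col) a'.1 = r := congrArg Prod.fst heq
      have h2 : a'.2 = a.2 := fI_inj (congrArg Prod.snd heq)
      have h4 : a'.1 < a.1 := fI_lt_iff.1 (h1 ▸ hr)
      refine ⟨a'.1, h4, ?_⟩
      rw [← h2]
      simpa using ha'
    · exfalso
      have h1 : r = M T col := congrArg Prod.fst heq
      have h2 : fI (M T col) a.2 = Q T col := congrArg Prod.snd heq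
      have h3 : a.2 = col := by
        have := fD_fI (M T col) a.2
        rw [h2, fD_Q (T := T) (col := col)] at this
        omega
      have h5 : a.1 < M T col := by
        rw [← K1 (T := T) (col := col), ← h3]
        exact T.points_mem_shape (by simpa using ha)
      have : fI (M T col) a.1 = a.1 := by unfold fI; split <;> omega
      omega
    · have h2 : fI (M T col) a.2 = M T col := congrArg Prod.snd heq
      exact absurd h2 (fI_ne _ _)
  · rintro ⟨r, hr, hmem⟩
    exact ⟨fI (M T col) r, fI_lt_iff.2 hr, (mem_insP).2 (Or.inl ⟨(r, a.2), hmem, rfl⟩)⟩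

lemma W_horiz (hsym : T.IsSymmetric) (hcol : (0, col) ∈ T.shape) {a : ℕ × ℕ}
    (ha : a ∈ T.points) :
    (∃ c < fI (M T col) a.2, (fI (M T col) a.1, c) ∈ insP T col) ↔
      (∃ c < a.2, (a.1, c) ∈ T.points) := by
  constructor
  · rintro ⟨c, hc, hmem⟩
    rcases (mem_insP).1 hmem with ⟨a', ha', heq⟩ | heq | heq
    · have h1 : fI (M T col) a'.2 = c := congrArg Prod.snd heq
      have h2 : a'.1 = a.1 := fI_inj (congrArg Prod.fst heq)
      have h4 : a'.2 < a.2 := fI_lt_iff.1 (h1 ▸ hc)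
      refine ⟨a'.2, h4, ?_⟩
      rw [← h2]
      simpa using ha'
    · have h2 : fI (M T col) a.1 = M T col := congrArg Prod.fst heq
      exact absurd h2 (fI_ne _ _)
    · exfalso
      have h1 : c = M T col := congrArg Prod.snd heq
      have h2 : fI (M T col) a.1 = Q T col := congrArg Prod.fst heq
      have h3 : a.1 = col := by
        have := fD_fI (M T col) a.1
        rw [h2, fD_Q (T := T) (col := col)] at this
        omega
      have h5 : a.2 < M T col := by
        rw [← K2 hsym, ← h3]
        exact T.points_mem_shape (by simpa using ha)
      have : fI (M T col) a.2 = a.2 := by unfold fI; split <;> omega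
      omega
  · rintro ⟨c, hc, hmem⟩
    exact ⟨fI (M T col) c, fI_lt_iff.2 hc, (mem_insP).2 (Or.inl ⟨(a.1, c), hmem, rfl⟩)⟩

/-- The insertion of a symmetric pair of (row, column) at the bottom of column `col`. -/
noncomputable def ins (hsym : T.IsSymmetric) (hcol : (0, col) ∈ T.shape) : TreeLikeTableau where
  shape := insShape hsym hcol
  points := insP T col
  points_subset := by
    rintro ⟨x, y⟩ hp
    rw [YoungDiagram.mem_cells (μ := insShape hsym hcol)]
    show (x, y) ∈ insCells T col
    rcases (mem_insP).1 hp with ⟨a, ha, heq⟩ | heq | heq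
    · obtain ⟨h1, h2⟩ := Prod.mk.injEq .. ▸ heq
      rw [mem_insCells, ← h1, ← h2]
      refine Or.inr (Or.inr ⟨fI_ne _ _, fI_ne _ _, ?_⟩)
      rw [fD_fI, fD_fI]
      exact T.points_mem_shape (by simpa using ha)
    · obtain ⟨h1, h2⟩ := Prod.mk.injEq .. ▸ heq
      rw [mem_insCells]
      exact Or.inl ⟨h1, by omega⟩
    · obtain ⟨h1, h2⟩ := Prod.mk.injEq .. ▸ heq
      rw [mem_insCells]
      exact Or.inr (Or.inl ⟨h2, by omega⟩)
  root_mem := by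
    have h0 : fI (M T col) 0 = 0 := fI_zero (hM1 hcol)
    exact (mem_insP).2 (Or.inl ⟨(0, 0), T.root_mem, by rw [h0]⟩)
  point_cond := by
    rintro ⟨x, y⟩ hp hroot
    rcases (mem_insP).1 hp with ⟨a, ha, heq⟩ | heq | heq
    · obtain ⟨h1, h2⟩ := Prod.mk.injEq .. ▸ heq
      subst h1; subst h2
      have hane : a ≠ (0, 0) := by
        rintro rfl
        exact hroot (by simp [fI_zero (hM1 hcol)])
      have := T.point_cond a ha hane
      exact (xor'_congr (W_vert hcol ha) (W_horiz hsym hcol ha)).2 this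
    · obtain ⟨h1, h2⟩ := Prod.mk.injEq .. ▸ heq
      subst h1; subst h2
      obtain ⟨r, hrpt⟩ := T.no_empty_col 0 col ((YoungDiagram.mem_cells _).2 hcol)
      have hrM : r < M T col := (K1 (T := T) (col := col)).1 (T.points_mem_shape hrpt)
      refine Or.inl ⟨⟨r, hrM, ?_⟩, ?_⟩
      · refine (mem_insP).2 (Or.inl ⟨(r, col), hrpt, ?_⟩)
        have : fI (M T col) r = r := by unfold fI; split <;> omega
        rw [this, fI_col]
      · rintro ⟨c, hc, hcmem⟩
        have := (insP_row_m (T := T) (col := col)).1 hcmem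
        omega
    · obtain ⟨h1, h2⟩ := Prod.mk.injEq .. ▸ heq
      subst h1; subst h2
      obtain ⟨r, hrpt⟩ := T.no_empty_col 0 col ((YoungDiagram.mem_cells _).2 hcol)
      have hrM : r < M T col := (K1 (T := T) (col := col)).1 (T.points_mem_shape hrpt)
      refine Or.inr ⟨⟨r, hrM, ?_⟩, ?_⟩
      · refine (mem_insP).2 (Or.inl ⟨(col, r), (hsym.2 (r, col)).1 hrpt, ?_⟩)
        have : fI (M T col) r = r := by unfold fI; split <;> omega
        rw [this, fI_col]
      · rintro ⟨c, hc, hcmem⟩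
        have := (insP_col_m (T := T) (col := col)).1 hcmem
        omega
  no_empty_row := by
    intro i j hij
    rw [YoungDiagram.mem_cells (μ := insShape hsym hcol)] at hij
    by_cases hi : i = M T col
    · exact ⟨Q T col, (mem_insP).2 (Or.inr (Or.inl (by rw [hi])))⟩
    · have hrow : (fD (M T col) i, 0) ∈ T.shape := by
        rcases (mem_insCells (T := T) (col := col)).1 hij with ⟨h1, _⟩ | ⟨h1, h2⟩ | ⟨_, _, h3⟩
        · exact absurd h1 hi
        · have hfdi : fD (M T col) i ≤ col := by
            rcases hQ_cases (T := T) (col := col) with ⟨e1, e2⟩ | ⟨e1, e2⟩ <;>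
              unfold fD <;> split <;> omega
          exact row_le_col_nonempty hsym hcol hfdi
        · exact T.shape.up_left_mem le_rfl (Nat.zero_le _) h3
      obtain ⟨c, hcpt⟩ := T.no_empty_row (fD (M T col) i) 0 ((YoungDiagram.mem_cells _).2 hrow)
      exact ⟨fI (M T col) c, (mem_insP).2 (Or.inl ⟨(fD (M T col) i, c), hcpt, by rw [fI_fD hi]⟩)⟩
  no_empty_col := by
    intro i j hij
    rw [YoungDiagram.mem_cells (μ := insShape hsym hcol)] at hij
    by_cases hj : j = M T col
    · exact ⟨Q T col, (mem_insP).2 (Or.inr (Or.inr (by rw [hj])))⟩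
    · have hcolne : (0, fD (M T col) j) ∈ T.shape := by
        rcases (mem_insCells (T := T) (col := col)).1 hij with ⟨h1, h2⟩ | ⟨h1, _⟩ | ⟨_, _, h3⟩
        · have hfdj : fD (M T col) j ≤ col := by
            rcases hQ_cases (T := T) (col := col) with ⟨e1, e2⟩ | ⟨e1, e2⟩ <;>
              unfold fD <;> split <;> omega
          exact T.shape.up_left_mem le_rfl hfdj hcol
        · exact absurd h1 hj
        · exact T.shape.up_left_mem (Nat.zero_le _) le_rfl h3
      obtain ⟨r, hrpt⟩ := T.no_empty_col 0 (fD (M T col) j) ((YoungDiagram.mem_cells _).2 hcolne)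
      exact ⟨fI (M T col) r, (mem_insP).2 (Or.inl ⟨(r, fD (M T col) j), hrpt, by rw [fI_fD hj]⟩)⟩

lemma ins_points (hsym : T.IsSymmetric) (hcol : (0, col) ∈ T.shape) :
    (ins hsym hcol).points = insP T col := rfl

lemma ins_shape_mem (hsym : T.IsSymmetric) (hcol : (0, col) ∈ T.shape) {i j : ℕ} :
    (i, j) ∈ (ins hsym hcol).shape ↔ (i, j) ∈ insCells T col := Iff.rfl

lemma ins_size (hsym : T.IsSymmetric) (hcol : (0, col) ∈ T.shape) :
    (ins hsym hcol).points.card = T.points.card + 2 := by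
  rw [ins_points]
  unfold insP
  rw [Finset.card_union_of_disjoint, Finset.card_image_of_injective, Finset.card_insert_of_notMem,
    Finset.card_singleton]
  · simp only [Finset.mem_singleton, Prod.mk.injEq]
    intro ⟨h1, h2⟩
    exact hQM (T := T) (col := col) h1.symm
  · intro p p' h
    obtain ⟨h1, h2⟩ := Prod.mk.injEq .. ▸ h
    exact Prod.ext (fI_inj h1) (fI_inj h2)
  · rw [Finset.disjoint_right]
    rintro p hp himg
    obtain ⟨a, _, heq⟩ := Finset.mem_image.1 himg
    simp only [Finset.mem_insert, Finset.mem_singleton] at hp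
    rcases hp with rfl | rfl
    · exact fI_ne _ _ (congrArg Prod.fst heq)
    · exact fI_ne _ _ (congrArg Prod.snd heq)

lemma ins_sym (hsym : T.IsSymmetric) (hcol : (0, col) ∈ T.shape) :
    (ins hsym hcol).IsSymmetric := by
  constructor
  · apply YoungDiagram.ext
    ext ⟨i, j⟩
    rw [YoungDiagram.mem_cells, YoungDiagram.mem_cells, YoungDiagram.mem_transpose]
    show (j, i) ∈ insCells T col ↔ (i, j) ∈ insCells T col
    rw [mem_insCells, mem_insCells]
    constructor
    · rintro (h | h | ⟨h1, h2, h3⟩)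
      · exact Or.inr (Or.inl h)
      · exact Or.inl h
      · exact Or.inr (Or.inr ⟨h2, h1, (T.mem_shape_swap hsym).1 h3⟩)
    · rintro (h | h | ⟨h1, h2, h3⟩)
      · exact Or.inr (Or.inl h)
      · exact Or.inl h
      · exact Or.inr (Or.inr ⟨h2, h1, (T.mem_shape_swap hsym).1 h3⟩)
  · rintro ⟨i, j⟩
    rw [ins_points, mem_insP, mem_insP]
    constructor
    · rintro (⟨a, ha, heq⟩ | heq | heq)
      · obtain ⟨h1, h2⟩ := Prod.mk.injEq .. ▸ heq
        exact Or.inl ⟨(a.2, a.1), (hsym.2 a).1 (by simpa using ha), by rw [Prod.mk.injEq]; exact ⟨h2, h1⟩⟩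
      · obtain ⟨h1, h2⟩ := Prod.mk.injEq .. ▸ heq
        exact Or.inr (Or.inr (by rw [Prod.mk.injEq]; exact ⟨h2, h1⟩))
      · obtain ⟨h1, h2⟩ := Prod.mk.injEq .. ▸ heq
        exact Or.inr (Or.inl (by rw [Prod.mk.injEq]; exact ⟨h2, h1⟩))
    · rintro (⟨a, ha, heq⟩ | heq | heq)
      · obtain ⟨h1, h2⟩ := Prod.mk.injEq .. ▸ heq
        exact Or.inl ⟨(a.2, a.1), (hsym.2 a).1 (by simpa using ha), by rw [Prod.mk.injEq]; exact ⟨h2, h1⟩⟩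
      · obtain ⟨h1, h2⟩ := Prod.mk.injEq .. ▸ heq
        exact Or.inr (Or.inr (by rw [Prod.mk.injEq]; exact ⟨h2, h1⟩))
      · obtain ⟨h1, h2⟩ := Prod.mk.injEq .. ▸ heq
        exact Or.inr (Or.inl (by rw [Prod.mk.injEq]; exact ⟨h2, h1⟩))

end TLTaux


namespace TLTaux

open TreeLikeTableau

attribute [local instance] Classical.propDecidable

variable {T : TreeLikeTableau} {col : ℕ}

lemma insCells_swap (hsym : T.IsSymmetric) {i j : ℕ} :
    (i, j) ∈ insCells T col ↔ (j, i) ∈ insCells T col := by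
  rw [mem_insCells, mem_insCells]
  constructor
  · rintro (h | h | ⟨h1, h2, h3⟩)
    · exact Or.inr (Or.inl h)
    · exact Or.inl h
    · exact Or.inr (Or.inr ⟨h2, h1, (T.mem_shape_swap hsym).1 h3⟩)
  · rintro (h | h | ⟨h1, h2, h3⟩)
    · exact Or.inr (Or.inl h)
    · exact Or.inl h
    · exact Or.inr (Or.inr ⟨h2, h1, (T.mem_shape_swap hsym).1 h3⟩)

lemma cell_below (hcol : (0, col) ∈ T.shape) {a1 a2 : ℕ} :
    (fI (M T col) a1 + 1, fI (M T col) a2) ∈ insCells T col ↔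
      ((a1 + 1, a2) ∈ T.shape ∨ (a1 + 1 = M T col ∧ a2 ≤ col)) := by
  have hqc := hQ_cases (T := T) (col := col)
  rcases Nat.lt_trichotomy (a1 + 1) (M T col) with h | h | h
  · have hfa : fI (M T col) a1 = a1 := by unfold fI; split <;> omega
    rw [hfa, mem_insCells]
    constructor
    · rintro (⟨h1, _⟩ | ⟨h1, _⟩ | ⟨_, _, h3⟩)
      · omega
      · exact absurd h1 (fI_ne _ _)
      · rw [show fD (M T col) (a1+1) = a1 + 1 by unfold fD; split <;> omega, fD_fI] at h3
        exact Or.inl h3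
    · rintro (h3 | ⟨h1, _⟩)
      · refine Or.inr (Or.inr ⟨by omega, fI_ne _ _, ?_⟩)
        rwa [show fD (M T col) (a1+1) = a1 + 1 by unfold fD; split <;> omega, fD_fI]
      · omega
  · have hfa : fI (M T col) a1 = a1 := by unfold fI; split <;> omega
    rw [hfa, h, mem_insCells]
    have hfq : fI (M T col) a2 ≤ Q T col ↔ a2 ≤ col := by
      unfold fI; rcases hqc with ⟨e1, e2⟩ | ⟨e1, e2⟩ <;> split <;> omega
    constructor
    · rintro (⟨_, h2⟩ | ⟨h1, _⟩ | ⟨h1, _, _⟩)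
      · exact Or.inr ⟨rfl, hfq.1 h2⟩
      · exact absurd h1 (fI_ne _ _)
      · omega
    · rintro (h3 | ⟨_, h2⟩)
      · have := col_lt_of_deep (col := col) h3 (by omega)
        exact Or.inl ⟨rfl, hfq.2 (by omega)⟩
      · exact Or.inl ⟨rfl, hfq.2 h2⟩
  · have hfa : fI (M T col) a1 = a1 + 1 := by unfold fI; split <;> omega
    rw [hfa, mem_insCells]
    constructor
    · rintro (⟨h1, _⟩ | ⟨h1, _⟩ | ⟨_, _, h3⟩)
      · omega
      · exact absurd h1 (fI_ne _ _)
      · rw [show fD (M T col) (a1+1+1) = a1 + 1 by unfold fD; split <;> omega, fD_fI] at h3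
        exact Or.inl h3
    · rintro (h3 | ⟨h1, _⟩)
      · refine Or.inr (Or.inr ⟨by omega, fI_ne _ _, ?_⟩)
        rwa [show fD (M T col) (a1+1+1) = a1 + 1 by unfold fD; split <;> omega, fD_fI]
      · omega

lemma cell_right (hsym : T.IsSymmetric) (hcol : (0, col) ∈ T.shape) {a1 a2 : ℕ} :
    (fI (M T col) a1, fI (M T col) a2 + 1) ∈ insCells T col ↔
      ((a1, a2 + 1) ∈ T.shape ∨ (a2 + 1 = M T col ∧ a1 ≤ col)) := by
  rw [insCells_swap hsym, cell_below hcol, T.mem_shape_swap hsym]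

lemma newpt_corner (hsym : T.IsSymmetric) (hcol : (0, col) ∈ T.shape) :
    (M T col, Q T col) ∈ (ins hsym hcol).occCorners := by
  have hqm := hQM (T := T) (col := col)
  rw [occCorners, Finset.mem_filter]
  refine ⟨(mem_insP).2 (Or.inr (Or.inl rfl)), ?_, ?_⟩
  · rw [YoungDiagram.mem_cells]
    show ¬((M T col + 1, Q T col) ∈ insCells T col)
    rw [mem_insCells]
    rintro (⟨h1, _⟩ | ⟨h1, _⟩ | ⟨_, _, h3⟩)
    · omega
    · exact hqm h1
    · rw [show fD (M T col) (M T col + 1) = M T col by unfold fD; split <;> omega,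
        fD_Q (T := T) (col := col)] at h3
      exact absurd ((K1 (T := T) (col := col)).1 h3) (by omega)
  · rw [YoungDiagram.mem_cells]
    show ¬((M T col, Q T col + 1) ∈ insCells T col)
    rw [mem_insCells]
    have hqc := hQ_cases (T := T) (col := col)
    rintro (⟨_, h2⟩ | ⟨h1, h2⟩ | ⟨h1, _, _⟩)
    · omega
    · rcases hqc with ⟨e1, e2⟩ | ⟨e1, e2⟩ <;> omega
    · exact h1 rfl

lemma newpt_corner' (hsym : T.IsSymmetric) (hcol : (0, col) ∈ T.shape) :
    (Q T col, M T col) ∈ (ins hsym hcol).occCorners :=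
  ((ins hsym hcol).occC_swap (ins_sym hsym hcol)).1 (newpt_corner hsym hcol)

lemma newpt_AC (hsym : T.IsSymmetric) (hcol : (0, col) ∈ T.shape) :
    (M T col, Q T col) ∈ (ins hsym hcol).AC := by
  rw [AC, Finset.mem_filter]
  refine ⟨newpt_corner hsym hcol, ?_⟩
  obtain ⟨r, hrpt⟩ := T.no_empty_col 0 col ((YoungDiagram.mem_cells _).2 hcol)
  have hrM : r < M T col := (K1 (T := T) (col := col)).1 (T.points_mem_shape hrpt)
  refine ⟨r, hrM, (mem_insP).2 (Or.inl ⟨(r, col), hrpt, ?_⟩)⟩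
  have : fI (M T col) r = r := by unfold fI; split <;> omega
  rw [this, fI_col]

lemma ins_occC_iff (hsym : T.IsSymmetric) (hcol : (0, col) ∈ T.shape) {p : ℕ × ℕ} :
    p ∈ (ins hsym hcol).occCorners ↔
      p = (M T col, Q T col) ∨ p = (Q T col, M T col) ∨
        ∃ a ∈ T.occCorners, ¬(a.1 + 1 = M T col ∧ a.2 ≤ col) ∧
          ¬(a.2 + 1 = M T col ∧ a.1 ≤ col) ∧ p = (fI (M T col) a.1, fI (M T col) a.2) := by
  constructor
  · intro hp
    rw [occCorners, Finset.mem_filter] at hp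
    obtain ⟨hpt, hb, hr⟩ := hp
    rcases (mem_insP).1 hpt with ⟨a, ha, heq⟩ | heq | heq
    · refine Or.inr (Or.inr ⟨a, ?_, ?_, ?_, heq.symm⟩)
      · rw [occCorners, Finset.mem_filter]
        rw [YoungDiagram.mem_cells] at hb hr
        rw [← heq] at hb hr
        simp only at hb hr
        rw [show ((ins hsym hcol).shape : YoungDiagram) = insShape hsym hcol from rfl] at hb hr
        have hb' := (not_iff_not.2 (cell_below (a1 := a.1) (a2 := a.2) hcol)).1 hb
        have hr' := (not_iff_not.2 (cell_right (a1 := a.1) (a2 := a.2) hsym hcol)).1 hr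
        push_neg at hb' hr'
        exact ⟨ha, by rw [YoungDiagram.mem_cells]; exact hb'.1, by rw [YoungDiagram.mem_cells]; exact hr'.1⟩
      · rw [YoungDiagram.mem_cells] at hb
        rw [← heq] at hb
        have hb' := (not_iff_not.2 (cell_below (a1 := a.1) (a2 := a.2) hcol)).1 hb
        push_neg at hb'
        intro hx
        have := hb'.2 hx.1
        omega
      · rw [YoungDiagram.mem_cells] at hr
        rw [← heq] at hr
        have hr' := (not_iff_not.2 (cell_right (a1 := a.1) (a2 := a.2) hsym hcol)).1 hr
        push_neg at hr'
        intro hx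
        have := hr'.2 hx.1
        omega
    · rw [heq]; exact Or.inl rfl
    · rw [heq]; exact Or.inr (Or.inl rfl)
  · rintro (rfl | rfl | ⟨a, ha, hc1, hc2, rfl⟩)
    · exact newpt_corner hsym hcol
    · exact newpt_corner' hsym hcol
    · rw [occCorners, Finset.mem_filter] at ha ⊢
      obtain ⟨hapt, hab, har⟩ := ha
      refine ⟨(mem_insP).2 (Or.inl ⟨a, hapt, rfl⟩), ?_, ?_⟩
      · rw [YoungDiagram.mem_cells]
        show ¬((fI (M T col) a.1 + 1, fI (M T col) a.2) ∈ insCells T col)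
        rw [cell_below hcol]
        rintro (h | h)
        · exact hab (by rw [YoungDiagram.mem_cells]; exact h)
        · exact hc1 h
      · rw [YoungDiagram.mem_cells]
        show ¬((fI (M T col) a.1, fI (M T col) a.2 + 1) ∈ insCells T col)
        rw [cell_right hsym hcol]
        rintro (h | h)
        · exact har (by rw [YoungDiagram.mem_cells]; exact h)
        · exact hc2 h

end TLTaux


namespace TLTaux

open TreeLikeTableau

attribute [local instance] Classical.propDecidable

variable {T : TreeLikeTableau} {col : ℕ}

/-- the bottom cell of column `col` -/
noncomputable def B1 (T : TreeLikeTableau) (col : ℕ) : ℕ × ℕ := (M T col - 1, col)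
/-- its mirror -/
noncomputable def B2 (T : TreeLikeTableau) (col : ℕ) : ℕ × ℕ := (col, M T col - 1)

lemma cond_iff_B1 (hcol : (0, col) ∈ T.shape) {a : ℕ × ℕ} (ha : a ∈ T.occCorners) :
    (a.1 + 1 = M T col ∧ a.2 ≤ col) ↔ a = B1 T col := by
  have hm1 : 1 ≤ M T col := hM1 hcol
  constructor
  · rintro ⟨h1, h2⟩
    have hge : col ≤ a.2 := by
      by_contra h
      rw [occCorners, Finset.mem_filter] at ha
      apply ha.2.2
      rw [YoungDiagram.mem_cells]
      have hmem : (M T col - 1, col) ∈ T.shape := (K1 (T := T) (col := col)).2 (by omega)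
      have : (a.1, a.2 + 1) ∈ T.shape := T.shape.up_left_mem (by omega) (by omega) hmem
      exact (show (a.1, a.2 + 1) ∈ T.shape from this)
    have : a.2 = col := by omega
    unfold B1
    rw [Prod.ext_iff]
    exact ⟨by omega, this⟩
  · rintro rfl
    unfold B1
    exact ⟨by simp; omega, by simp⟩

lemma cond_iff_B2 (hsym : T.IsSymmetric) (hcol : (0, col) ∈ T.shape) {a : ℕ × ℕ}
    (ha : a ∈ T.occCorners) :
    (a.2 + 1 = M T col ∧ a.1 ≤ col) ↔ a = B2 T col := by
  obtain ⟨a1, a2⟩ := a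
  have hswap : (a2, a1) ∈ T.occCorners := (T.occC_swap hsym).1 ha
  have := cond_iff_B1 hcol (a := (a2, a1)) hswap
  simp only at this ⊢
  rw [this]
  unfold B1 B2
  simp only [Prod.mk.injEq]
  tauto

lemma ins_occC_eq (hsym : T.IsSymmetric) (hcol : (0, col) ∈ T.shape) :
    (ins hsym hcol).occCorners =
      (T.occCorners.filter (fun a => a ≠ B1 T col ∧ a ≠ B2 T col)).image
          (fun a => (fI (M T col) a.1, fI (M T col) a.2)) ∪
        {(M T col, Q T col), (Q T col, M T col)} := by
  ext p
  rw [ins_occC_iff hsym hcol]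
  simp only [Finset.mem_union, Finset.mem_image, Finset.mem_filter, Finset.mem_insert,
    Finset.mem_singleton]
  constructor
  · rintro (rfl | rfl | ⟨a, ha, h1, h2, rfl⟩)
    · exact Or.inr (Or.inl rfl)
    · exact Or.inr (Or.inr rfl)
    · refine Or.inl ⟨a, ⟨ha, ?_, ?_⟩, rfl⟩
      · exact fun h => h1 ((cond_iff_B1 hcol ha).2 h)
      · exact fun h => h2 ((cond_iff_B2 hsym hcol ha).2 h)
  · rintro (⟨a, ⟨ha, h1, h2⟩, rfl⟩ | rfl | rfl)
    · refine Or.inr (Or.inr ⟨a, ha, ?_, ?_, rfl⟩)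
      · exact fun h => h1 ((cond_iff_B1 hcol ha).1 h)
      · exact fun h => h2 ((cond_iff_B2 hsym hcol ha).1 h)
    · exact Or.inl rfl
    · exact Or.inr (Or.inl rfl)

lemma ins_oc_eq (hsym : T.IsSymmetric) (hcol : (0, col) ∈ T.shape)
    (hcard : 2 ≤ T.points.card) :
    (ins hsym hcol).oc + (if B1 T col ∈ T.occCorners then 2 else 0) = T.oc + 2 := by
  have hqm := hQM (T := T) (col := col)
  have hm1 : 1 ≤ M T col := hM1 hcol
  rw [TreeLikeTableau.oc, ins_occC_eq hsym hcol]
  rw [Finset.card_union_of_disjoint, Finset.card_image_of_injective _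
    (fun p p' h => Prod.ext (fI_inj (congrArg Prod.fst h)) (fI_inj (congrArg Prod.snd h))),
    Finset.card_insert_of_notMem (by simp [Prod.ext_iff]; omega), Finset.card_singleton]
  rotate_left
  · rw [Finset.disjoint_right]
    rintro p hp himg
    obtain ⟨a, _, heq⟩ := Finset.mem_image.1 himg
    simp only [Finset.mem_insert, Finset.mem_singleton] at hp
    rcases hp with rfl | rfl
    · exact fI_ne _ _ (congrArg Prod.fst heq)
    · exact fI_ne _ _ (congrArg Prod.snd heq)
  have hfilter : T.occCorners.filter (fun a => a ≠ B1 T col ∧ a ≠ B2 T col) =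
      T.occCorners \ {B1 T col, B2 T col} := by
    ext a
    simp only [Finset.mem_filter, Finset.mem_sdiff, Finset.mem_insert, Finset.mem_singleton]
    tauto
  rw [hfilter]
  by_cases hB : B1 T col ∈ T.occCorners
  · have hB2 : B2 T col ∈ T.occCorners := by
      simp only [B1] at hB
      simp only [B2]
      exact (T.occC_swap hsym).1 hB
    have hne : B1 T col ≠ B2 T col := by
      intro h
      simp only [B1, B2, Prod.mk.injEq] at h
      have hBB : B1 T col = (col, col) := by simp only [B1]; rw [h.1]
      rw [hBB] at hB
      exact T.occC_no_diag hsym hcard col hB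
    have hsub : {B1 T col, B2 T col} ⊆ T.occCorners := by
      intro x hx
      simp only [Finset.mem_insert, Finset.mem_singleton] at hx
      rcases hx with rfl | rfl
      · exact hB
      · exact hB2
    rw [Finset.card_sdiff_of_subset hsub, Finset.card_pair hne, if_pos hB]
    have : 2 ≤ T.occCorners.card := by
      calc 2 = ({B1 T col, B2 T col} : Finset (ℕ × ℕ)).card := (Finset.card_pair hne).symm
      _ ≤ _ := Finset.card_le_card hsub
    unfold TreeLikeTableau.oc
    omega
  · have hB2 : B2 T col ∉ T.occCorners := by
      intro h
      apply hB
      simp only [B2] at h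
      simp only [B1]
      exact (T.occC_swap hsym).1 h
    have : T.occCorners \ {B1 T col, B2 T col} = T.occCorners := by
      apply Finset.sdiff_eq_self_of_disjoint
      rw [Finset.disjoint_right]
      intro x hx hmem
      simp only [Finset.mem_insert, Finset.mem_singleton] at hx
      rcases hx with rfl | rfl
      · exact hB hmem
      · exact hB2 hmem
    rw [this, if_neg hB]
    unfold TreeLikeTableau.oc
    omega

end TLTaux


namespace TLTaux

open TreeLikeTableau

attribute [local instance] Classical.propDecidable

variable {T : TreeLikeTableau} {c : ℕ × ℕ}

section DelFacts

variable (hsym : T.IsSymmetric) (hcard : 2 ≤ T.points.card) (hc : c ∈ T.AC)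

lemma hc_occ (hc : c ∈ T.AC) : c ∈ T.occCorners := (Finset.mem_filter.1 hc).1

lemma hc_pt (hc : c ∈ T.AC) : c ∈ T.points := T.occC_subset_points (hc_occ hc)

lemma habove (hc : c ∈ T.AC) : ∃ r < c.1, (r, c.2) ∈ T.points := (Finset.mem_filter.1 hc).2

lemma hi1 (hc : c ∈ T.AC) : 1 ≤ c.1 := by
  obtain ⟨r, hr, _⟩ := habove hc; omega

lemma hne (hsym : T.IsSymmetric) (hcard : 2 ≤ T.points.card) (hc : c ∈ T.AC) : c.1 ≠ c.2 := by
  intro h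
  have := T.occC_no_diag hsym hcard c.1
  rw [show ((c.1 : ℕ), (c.1 : ℕ)) = c by rw [Prod.ext_iff]; exact ⟨rfl, h⟩] at this
  exact this (hc_occ hc)

lemma hc_ne_root (hc : c ∈ T.AC) : c ≠ (0, 0) := by
  intro h
  have := hi1 hc
  rw [h] at this
  simp at this

lemma F_shape_right (hc : c ∈ T.AC) : (c.1, c.2 + 1) ∉ T.shape := by
  have := (Finset.mem_filter.1 (hc_occ hc)).2.2
  rwa [YoungDiagram.mem_cells] at this

lemma F_shape_below (hc : c ∈ T.AC) : (c.1 + 1, c.2) ∉ T.shape := by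
  have := (Finset.mem_filter.1 (hc_occ hc)).2.1
  rwa [YoungDiagram.mem_cells] at this

lemma F_row_cells (hc : c ∈ T.AC) {t : ℕ} : (c.1, t) ∈ T.shape ↔ t ≤ c.2 := by
  constructor
  · intro h
    by_contra hgt
    exact F_shape_right hc (T.shape.up_left_mem le_rfl (by omega) h)
  · intro h
    exact T.shape.up_left_mem le_rfl h (T.points_mem_shape (hc_pt hc))

lemma F_col_cells (hsym : T.IsSymmetric) (hc : c ∈ T.AC) {t : ℕ} :
    (t, c.1) ∈ T.shape ↔ t ≤ c.2 := by
  rw [T.mem_shape_swap hsym]; exact F_row_cells hc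

lemma F_colj (hc : c ∈ T.AC) {t : ℕ} : (t, c.2) ∈ T.shape ↔ t ≤ c.1 := by
  constructor
  · intro h
    by_contra hgt
    exact F_shape_below hc (T.shape.up_left_mem (by omega) le_rfl h)
  · intro h
    exact T.shape.up_left_mem h le_rfl (T.points_mem_shape (hc_pt hc))

lemma F_rowj (hsym : T.IsSymmetric) (hc : c ∈ T.AC) {t : ℕ} :
    (c.2, t) ∈ T.shape ↔ t ≤ c.1 := by
  rw [T.mem_shape_swap hsym]; exact F_colj hc

lemma F_row_pts (hc : c ∈ T.AC) {t : ℕ} : (c.1, t) ∈ T.points ↔ t = c.2 := by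
  constructor
  · intro h
    by_contra hne'
    rcases Nat.lt_or_ge t c.2 with hlt | hge
    · rcases T.point_cond c (hc_pt hc) (hc_ne_root hc) with ⟨_, hl⟩ | ⟨_, ha⟩
      · exact hl ⟨t, hlt, h⟩
      · exact ha (habove hc)
    · have : t ≤ c.2 := (F_row_cells hc).1 (T.points_mem_shape h)
      omega
  · rintro rfl
    exact hc_pt hc

lemma F_col_pts (hsym : T.IsSymmetric) (hc : c ∈ T.AC) {t : ℕ} :
    (t, c.1) ∈ T.points ↔ t = c.2 := by
  rw [hsym.2 (t, c.1)]
  exact F_row_pts hc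

end DelFacts

/-- deleted cells -/
noncomputable def delCells (T : TreeLikeTableau) (c : ℕ × ℕ) : Finset (ℕ × ℕ) :=
  delF c.1 T.shape.cells

lemma mem_delCells {i j : ℕ} : (i, j) ∈ delCells T c ↔ (fI c.1 i, fI c.1 j) ∈ T.shape := by
  unfold delCells
  rw [mem_delF, YoungDiagram.mem_cells]

/-- deleted points -/
noncomputable def delPts (T : TreeLikeTableau) (c : ℕ × ℕ) : Finset (ℕ × ℕ) :=
  delF c.1 T.points

lemma mem_delPts {i j : ℕ} : (i, j) ∈ delPts T c ↔ (fI c.1 i, fI c.1 j) ∈ T.points :=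
  mem_delF

/-- The deletion of the row and column of an above-witnessed occupied corner. -/
noncomputable def delT (hsym : T.IsSymmetric) (hcard : 2 ≤ T.points.card)
    (hc : c ∈ T.AC) : TreeLikeTableau where
  shape := ⟨delCells T c, by
    rintro ⟨i2, j2⟩ ⟨i1, j1⟩ ⟨(h1 : i1 ≤ i2), (h2 : j1 ≤ j2)⟩ hmem
    simp only [Finset.mem_coe, mem_delCells] at hmem ⊢
    exact T.shape.isLowerSet ⟨fI_mono h1, fI_mono h2⟩ hmem⟩
  points := delPts T c
  points_subset := by
    rintro ⟨x, y⟩ hp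
    rw [YoungDiagram.mem_cells]
    show (x, y) ∈ delCells T c
    rw [mem_delCells]
    exact T.points_mem_shape (mem_delPts.1 hp)
  root_mem := by
    show ((0 : ℕ), (0 : ℕ)) ∈ delPts T c
    rw [mem_delPts, fI_zero (hi1 hc)]
    exact T.root_mem
  point_cond := by
    rintro ⟨x, y⟩ hp hroot
    have hpt : (fI c.1 x, fI c.1 y) ∈ T.points := mem_delPts.1 hp
    have hptroot : ((fI c.1 x, fI c.1 y) : ℕ × ℕ) ≠ (0, 0) := by
      intro h
      apply hroot
      rw [Prod.ext_iff] at h ⊢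
      exact ⟨fI_eq_zero h.1, fI_eq_zero h.2⟩
    have hWv : (∃ r < x, (r, y) ∈ delPts T c) ↔
        (∃ r < fI c.1 x, (r, fI c.1 y) ∈ T.points) := by
      constructor
      · rintro ⟨r, hr, hmem⟩
        exact ⟨fI c.1 r, fI_lt_iff.2 hr, mem_delPts.1 hmem⟩
      · rintro ⟨r, hr, hmem⟩
        have hrne : r ≠ c.1 := by
          rintro rfl
          have h1 : fI c.1 y = c.2 := (F_row_pts hc).1 hmem
          have h2 : fI c.1 x ≤ c.1 := by
            rw [← F_colj hc (t := fI c.1 x), ← h1]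
            exact T.points_mem_shape hpt
          have := fI_ne c.1 x
          omega
        refine ⟨fD c.1 r, ?_, ?_⟩
        · have := fD_lt_fD hrne (fI_ne c.1 x) hr
          rwa [fD_fI] at this
        · rw [mem_delPts, fI_fD hrne]
          exact hmem
    have hWh : (∃ c' < y, (x, c') ∈ delPts T c) ↔
        (∃ c' < fI c.1 y, (fI c.1 x, c') ∈ T.points) := by
      constructor
      · rintro ⟨r, hr, hmem⟩
        exact ⟨fI c.1 r, fI_lt_iff.2 hr, mem_delPts.1 hmem⟩
      · rintro ⟨r, hr, hmem⟩
        have hrne : r ≠ c.1 := by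
          rintro rfl
          have h1 : fI c.1 x = c.2 := (F_col_pts hsym hc).1 hmem
          have h2 : fI c.1 y ≤ c.1 := by
            rw [← F_rowj hsym hc (t := fI c.1 y), ← h1]
            exact T.points_mem_shape hpt
          have := fI_ne c.1 y
          omega
        refine ⟨fD c.1 r, ?_, ?_⟩
        · have := fD_lt_fD hrne (fI_ne c.1 y) hr
          rwa [fD_fI] at this
        · rw [mem_delPts, fI_fD hrne]
          exact hmem
    exact (xor'_congr hWv hWh).2 (T.point_cond _ hpt hptroot)
  no_empty_row := by
    intro i j hij
    rw [YoungDiagram.mem_cells] at hij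
    have hcell : (fI c.1 i, fI c.1 j) ∈ T.shape := mem_delCells.1 hij
    obtain ⟨t, ht⟩ := T.no_empty_row (fI c.1 i) (fI c.1 j)
      ((YoungDiagram.mem_cells _).2 hcell)
    by_cases htc : t = c.1
    · subst htc
      have hia : fI c.1 i = c.2 := (F_col_pts hsym hc).1 ht
      obtain ⟨r, hr, hrpt⟩ := habove hc
      refine ⟨fD c.1 r, ?_⟩
      rw [mem_delPts, fI_fD (by omega : r ≠ c.1), hia]
      exact (hsym.2 (r, c.2)).1 hrpt
    · refine ⟨fD c.1 t, ?_⟩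
      rw [mem_delPts, fI_fD htc]
      exact ht
  no_empty_col := by
    intro i j hij
    rw [YoungDiagram.mem_cells] at hij
    have hcell : (fI c.1 i, fI c.1 j) ∈ T.shape := mem_delCells.1 hij
    obtain ⟨t, ht⟩ := T.no_empty_col (fI c.1 i) (fI c.1 j)
      ((YoungDiagram.mem_cells _).2 hcell)
    by_cases htc : t = c.1
    · subst htc
      have hja : fI c.1 j = c.2 := (F_row_pts hc).1 ht
      obtain ⟨r, hr, hrpt⟩ := habove hc
      refine ⟨fD c.1 r, ?_⟩
      rw [mem_delPts, fI_fD (by omega : r ≠ c.1), hja]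
      exact hrpt
    · refine ⟨fD c.1 t, ?_⟩
      rw [mem_delPts, fI_fD htc]
      exact ht

end TLTaux


namespace TLTaux

open TreeLikeTableau

attribute [local instance] Classical.propDecidable

variable {T : TreeLikeTableau} {c : ℕ × ℕ}

section DelLemmas

variable (hsym : T.IsSymmetric) (hcard : 2 ≤ T.points.card) (hc : c ∈ T.AC)

lemma delT_points : (delT hsym hcard hc).points = delPts T c := rfl

lemma delT_shape_mem {i j : ℕ} :
    (i, j) ∈ (delT hsym hcard hc).shape ↔ (fI c.1 i, fI c.1 j) ∈ T.shape := by
  rw [show ((i, j) ∈ (delT hsym hcard hc).shape) ↔ ((i, j) ∈ delCells T c) from Iff.rfl]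
  exact mem_delCells

lemma delT_sym : (delT hsym hcard hc).IsSymmetric := by
  constructor
  · apply YoungDiagram.ext
    ext ⟨i, j⟩
    rw [YoungDiagram.mem_cells, YoungDiagram.mem_cells, YoungDiagram.mem_transpose]
    show (j, i) ∈ (delT hsym hcard hc).shape ↔ (i, j) ∈ (delT hsym hcard hc).shape
    rw [delT_shape_mem, delT_shape_mem, T.mem_shape_swap hsym]
  · rintro ⟨i, j⟩
    show ((i, j) ∈ delPts T c) ↔ ((j, i) ∈ delPts T c)
    rw [mem_delPts, mem_delPts, hsym.2 (fI c.1 i, fI c.1 j)]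

lemma delT_size : (delT hsym hcard hc).points.card + 2 = T.points.card := by
  rw [delT_points]
  unfold delPts delF
  rw [Finset.card_image_of_injOn]
  swap
  · rintro ⟨a, b⟩ ha ⟨a', b'⟩ hb h
    simp only [Finset.mem_coe, Finset.mem_filter] at ha hb
    obtain ⟨h1, h2⟩ := Prod.mk.injEq .. ▸ h
    rw [Prod.mk.injEq]
    constructor
    · have := fI_fD ha.2.1; have := fI_fD hb.2.1
      rw [← fI_fD ha.2.1, ← fI_fD hb.2.1, h1]
    · rw [← fI_fD ha.2.2, ← fI_fD hb.2.2, h2]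
  have hfe : T.points.filter (fun p => p.1 ≠ c.1 ∧ p.2 ≠ c.1) =
      T.points \ {c, (c.2, c.1)} := by
    ext ⟨a, b⟩
    simp only [Finset.mem_filter, Finset.mem_sdiff, Finset.mem_insert, Finset.mem_singleton]
    constructor
    · rintro ⟨hp, h1, h2⟩
      refine ⟨hp, ?_⟩
      rintro (rfl | h)
      · exact h1 rfl
      · rw [Prod.mk.injEq] at h
        exact h2 h.2
    · rintro ⟨hp, h⟩
      refine ⟨hp, ?_, ?_⟩
      · intro h1
        apply h
        left
        have : b = c.2 := (F_row_pts hc).1 (by rw [← h1]; exact hp)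
        rw [Prod.mk.injEq]
        exact ⟨h1, this⟩
      · intro h2
        apply h
        right
        have : a = c.2 := (F_col_pts hsym hc).1 (by rw [← h2]; exact hp)
        rw [Prod.mk.injEq]
        exact ⟨this, h2⟩
  rw [hfe, Finset.card_sdiff_of_subset]
  · have hcc : c ≠ (c.2, c.1) := by
      intro h
      rw [Prod.ext_iff] at h
      exact hne hsym hcard hc h.1
    rw [Finset.card_pair hcc]
    have hsub : ({c, (c.2, c.1)} : Finset (ℕ × ℕ)) ⊆ T.points := by
      intro x hx
      simp only [Finset.mem_insert, Finset.mem_singleton] at hx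
      rcases hx with rfl | rfl
      · exact hc_pt hc
      · have := (hsym.2 c).1 (hc_pt hc)
        simpa using this
    have h2 : 2 ≤ T.points.card := by
      calc 2 = ({c, (c.2, c.1)} : Finset (ℕ × ℕ)).card := (Finset.card_pair (by
          intro h; rw [Prod.ext_iff] at h; exact hne hsym hcard hc h.1)).symm
      _ ≤ _ := Finset.card_le_card hsub
    omega
  · intro x hx
    simp only [Finset.mem_insert, Finset.mem_singleton] at hx
    rcases hx with rfl | rfl
    · exact hc_pt hc
    · have := (hsym.2 c).1 (hc_pt hc)
      simpa using this

lemma delT_col_iff {a : ℕ} :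
    (a, fD c.1 c.2) ∈ (delT hsym hcard hc).shape ↔ a < c.1 := by
  rw [delT_shape_mem, fI_fD (Ne.symm (hne hsym hcard hc))]
  have hfa : fI c.1 a ≤ c.1 ↔ a < c.1 := by unfold fI; split <;> omega
  rw [show ((fI c.1 a, c.2) ∈ T.shape) ↔ fI c.1 a ≤ c.1 from F_colj hc, hfa]

lemma delT_M : M (delT hsym hcard hc) (fD c.1 c.2) = c.1 := by
  unfold M
  apply Nat.le_antisymm
  · by_contra h
    push_neg at h
    have := (delT_col_iff hsym hcard hc (a := c.1)).1
      (YoungDiagram.mem_iff_lt_colLen.2 h)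
    omega
  · have h1 := hi1 hc
    have := (delT_col_iff hsym hcard hc (a := c.1 - 1)).2 (by omega)
    have := YoungDiagram.mem_iff_lt_colLen.1 this
    omega

lemma delT_hcol : (0, fD c.1 c.2) ∈ (delT hsym hcard hc).shape :=
  (delT_col_iff hsym hcard hc).2 (hi1 hc)

lemma delT_Q : Q (delT hsym hcard hc) (fD c.1 c.2) = c.2 := by
  unfold Q
  rw [delT_M]
  have h1 := hi1 hc
  have h2 := hne hsym hcard hc
  unfold fD; split <;> (try split) <;> omega

lemma ins_delT :
    ins (delT_sym hsym hcard hc) (delT_hcol hsym hcard hc) = T := by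
  apply TreeLikeTableau.ext'
  · apply YoungDiagram.ext
    show insCells (delT hsym hcard hc) (fD c.1 c.2) = T.shape.cells
    unfold insCells
    rw [delT_M, delT_Q]
    show insF c.1 c.2 (delF c.1 T.shape.cells) = T.shape.cells
    apply insF_delF
    · intro t
      rw [YoungDiagram.mem_cells]
      exact F_row_cells hc
    · intro t
      rw [YoungDiagram.mem_cells]
      exact F_col_cells hsym hc
  · show insP (delT hsym hcard hc) (fD c.1 c.2) = T.points
    ext ⟨x, y⟩
    by_cases hx : x = c.1
    · subst hx
      have h := insP_row_m (T := delT hsym hcard hc) (col := fD c.1 c.2) (y := y)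
      rw [delT_M, delT_Q] at h
      rw [h]
      exact (F_row_pts hc).symm
    · by_cases hy : y = c.1
      · subst hy
        have h := insP_col_m (T := delT hsym hcard hc) (col := fD c.1 c.2) (x := x)
        rw [delT_M, delT_Q] at h
        rw [h]
        exact (F_col_pts hsym hc).symm
      · have h := insP_gen (T := delT hsym hcard hc) (col := fD c.1 c.2)
          (x := x) (y := y) (by rw [delT_M]; exact hx) (by rw [delT_M]; exact hy)
        rw [delT_M] at h
        rw [h, delT_points, mem_delPts, fI_fD hx, fI_fD hy]

end DelLemmas

section RT2

variable {col : ℕ} (hsym : T.IsSymmetric) (hcol : (0, col) ∈ T.shape)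

lemma ins_card2 : 2 ≤ (ins hsym hcol).points.card := by
  rw [ins_size]; omega

lemma delT_ins :
    delT (ins_sym hsym hcol) (ins_card2 hsym hcol) (newpt_AC hsym hcol) = T := by
  apply TreeLikeTableau.ext'
  · apply YoungDiagram.ext
    show delCells (ins hsym hcol) (M T col, Q T col) = T.shape.cells
    unfold delCells
    show delF (M T col) (insCells T col) = T.shape.cells
    unfold insCells
    exact delF_insF _ _ _
  · show delPts (ins hsym hcol) (M T col, Q T col) = T.points
    ext ⟨a, b⟩
    rw [show delPts (ins hsym hcol) (M T col, Q T col) = delF (M T col) (insP T col) from rfl,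
      mem_delF, insP_gen (fI_ne _ _) (fI_ne _ _), fD_fI, fD_fI]

lemma delT_ins_col : fD (M T col, Q T col).1 (M T col, Q T col).2 = col := by
  exact fD_Q (T := T) (col := col)

end RT2

end TLTaux


namespace TLTaux

open TreeLikeTableau

attribute [local instance] Classical.propDecidable

/-! ### Finiteness -/

lemma cell_lt_card {T : TreeLikeTableau} {i j : ℕ} (hij : (i, j) ∈ T.shape) :
    i < T.points.card ∧ j < T.points.card := by
  have h1 : i < T.shape.colLen 0 :=
    YoungDiagram.mem_iff_lt_colLen.1 (T.shape.up_left_mem le_rfl (Nat.zero_le j) hij)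
  have h2 : j < T.shape.rowLen 0 :=
    YoungDiagram.mem_iff_lt_rowLen.1 (T.shape.up_left_mem (Nat.zero_le i) le_rfl hij)
  have h3 : T.shape.colLen 0 ≤ T.points.card := by
    rw [← T.card_LP]
    exact Finset.card_le_card (Finset.filter_subset _ _)
  have h4 : T.shape.rowLen 0 ≤ T.points.card := by
    rw [← T.card_TP]
    exact Finset.card_le_card (Finset.filter_subset _ _)
  omega

lemma finite_size (s : ℕ) : {T : TreeLikeTableau | T.points.card = s}.Finite := by
  apply Set.Finite.of_finite_image (f := fun T => (T.shape.cells, T.points))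
  · apply Set.Finite.subset
      (Finset.finite_toSet (((Finset.range s ×ˢ Finset.range s).powerset) ×ˢ
        ((Finset.range s ×ˢ Finset.range s).powerset)))
    rintro ⟨cs, ps⟩ ⟨T, hT, heq⟩
    obtain ⟨h1, h2⟩ := Prod.mk.injEq .. ▸ heq
    simp only [Set.mem_setOf_eq] at hT
    have hcs : T.shape.cells ⊆ Finset.range s ×ˢ Finset.range s := by
      rintro ⟨a, bb⟩ hab
      rw [YoungDiagram.mem_cells] at hab
      obtain ⟨ha, hb⟩ := cell_lt_card hab
      rw [Finset.mem_product, Finset.mem_range, Finset.mem_range]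
      exact ⟨by omega, by omega⟩
    simp only [Finset.coe_product, Set.mem_prod, Finset.mem_coe, Finset.mem_powerset]
    exact ⟨by rw [← h1]; exact hcs, by rw [← h2]; exact T.points_subset.trans hcs⟩
  · rintro T1 hT1 T2 hT2 heq
    obtain ⟨h1, h2⟩ := Prod.mk.injEq .. ▸ heq
    exact TreeLikeTableau.ext' (YoungDiagram.ext h1) h2

/-- The set counted by `b`. -/
def Bset (n k : ℕ) : Set TreeLikeTableau :=
  {T : TreeLikeTableau | T.size = 2 * n + 1 ∧ T.IsSymmetric ∧ T.oc = 2 * k}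

lemma Bset_finite (n k : ℕ) : (Bset n k).Finite :=
  (finite_size (2 * n + 1)).subset (fun _ hT => hT.1)

noncomputable def BF (n k : ℕ) : Finset TreeLikeTableau := (Bset_finite n k).toFinset

lemma b_eq_card (n k : ℕ) : b n k = (BF n k).card := by
  unfold b BF
  exact Set.ncard_eq_toFinset_card _ _

lemma mem_BF {n k : ℕ} {T : TreeLikeTableau} :
    T ∈ BF n k ↔ T.points.card = 2 * n + 1 ∧ T.IsSymmetric ∧ T.oc = 2 * k := by
  unfold BF
  rw [Set.Finite.mem_toFinset]
  rfl

/-! ### Row length and corner counts -/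

lemma rowLen0_eq {T : TreeLikeTableau} (hsym : T.IsSymmetric) {m : ℕ}
    (hsize : T.points.card = 2 * m + 1) : T.shape.rowLen 0 = m + 1 := by
  have h1 := T.half_perimeter
  have h2 := T.rowLen_eq_colLen hsym 0
  omega

lemma card_AC_eq {T : TreeLikeTableau} (hsym : T.IsSymmetric) (hcard : 2 ≤ T.points.card)
    {k : ℕ} (hoc : T.oc = 2 * k) : T.AC.card = k := by
  have := T.card_occC_eq_two_mul hsym hcard
  unfold TreeLikeTableau.oc at hoc
  omega

lemma B1_of_occC {T : TreeLikeTableau} {p : ℕ × ℕ} (hp : p ∈ T.occCorners) :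
    B1 T p.2 = p := by
  have hpt : p ∈ T.shape := T.points_mem_shape (T.occC_subset_points hp)
  have hb : (p.1 + 1, p.2) ∉ T.shape := by
    have := (Finset.mem_filter.1 hp).2.1
    rwa [YoungDiagram.mem_cells] at this
  have hlen : T.shape.colLen p.2 = p.1 + 1 := by
    apply Nat.le_antisymm
    · by_contra h
      push_neg at h
      exact hb (YoungDiagram.mem_iff_lt_colLen.2 h)
    · have : p.1 < T.shape.colLen p.2 := YoungDiagram.mem_iff_lt_colLen.1 (by
        rw [show ((p.1, p.2) : ℕ × ℕ) = p from rfl]; exact hpt)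
      omega
  unfold B1 M
  rw [hlen]
  simp

/-- columns whose bottom cell is an occupied corner -/
noncomputable def colsOcc (T : TreeLikeTableau) : Finset ℕ :=
  (Finset.range (T.shape.rowLen 0)).filter (fun col => B1 T col ∈ T.occCorners)

/-- columns whose bottom cell is not an occupied corner -/
noncomputable def colsNot (T : TreeLikeTableau) : Finset ℕ :=
  (Finset.range (T.shape.rowLen 0)).filter (fun col => B1 T col ∉ T.occCorners)

lemma card_colsOcc (T : TreeLikeTableau) : (colsOcc T).card = T.oc := by
  unfold TreeLikeTableau.oc
  symm
  apply Finset.card_bij (fun p _ => p.2)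
  · intro p hp
    unfold colsOcc
    rw [Finset.mem_filter, Finset.mem_range]
    have hpt : p ∈ T.shape := T.points_mem_shape (T.occC_subset_points hp)
    constructor
    · rw [← YoungDiagram.mem_iff_lt_rowLen]
      exact T.shape.up_left_mem (Nat.zero_le _) le_rfl (by
        rw [show ((p.1, p.2) : ℕ × ℕ) = p from rfl]; exact hpt)
    · rw [B1_of_occC hp]
      exact hp
  · intro p hp p' hp' h
    rw [← B1_of_occC hp, ← B1_of_occC hp', h]
  · intro col hcol
    unfold colsOcc at hcol
    rw [Finset.mem_filter] at hcol
    refine ⟨B1 T col, hcol.2, ?_⟩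
    unfold B1
    rfl

lemma card_cols_split (T : TreeLikeTableau) :
    T.oc + (colsNot T).card = T.shape.rowLen 0 := by
  rw [← card_colsOcc]
  unfold colsOcc colsNot
  rw [Finset.card_filter_add_card_filter_not, Finset.card_range]

/-! ### The pair sets -/

noncomputable def XF (n k : ℕ) : Finset (TreeLikeTableau × (ℕ × ℕ)) :=
  (BF n k).biUnion (fun T => T.AC.image (fun c => (T, c)))

noncomputable def PF1 (n k : ℕ) : Finset (TreeLikeTableau × ℕ) :=
  (BF (n - 1) k).biUnion (fun T' => (colsOcc T').image (fun col => (T', col)))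

noncomputable def PF2 (n k : ℕ) : Finset (TreeLikeTableau × ℕ) :=
  (BF (n - 1) (k - 1)).biUnion (fun T' => (colsNot T').image (fun col => (T', col)))

lemma biUnion_disj {α β : Type*} [DecidableEq α] [DecidableEq β] (s : Finset α)
    (f : α → Finset β) :
    ∀ x ∈ s, ∀ y ∈ s, x ≠ y →
      Disjoint ((f x).image (fun c => (x, c))) ((f y).image (fun c => (y, c))) := by
  intro x _ y _ hxy
  rw [Finset.disjoint_left]
  rintro p hp hq
  obtain ⟨c, _, rfl⟩ := Finset.mem_image.1 hp
  obtain ⟨c', _, heq⟩ := Finset.mem_image.1 hq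
  exact hxy (congrArg Prod.fst heq).symm

lemma mem_XF {n k : ℕ} {a : TreeLikeTableau × (ℕ × ℕ)} :
    a ∈ XF n k ↔ a.1 ∈ BF n k ∧ a.2 ∈ a.1.AC := by
  unfold XF
  rw [Finset.mem_biUnion]
  constructor
  · rintro ⟨T, hT, ha⟩
    obtain ⟨c, hc, rfl⟩ := Finset.mem_image.1 ha
    exact ⟨hT, hc⟩
  · rintro ⟨h1, h2⟩
    exact ⟨a.1, h1, Finset.mem_image.2 ⟨a.2, h2, rfl⟩⟩

lemma mem_PF1 {n k : ℕ} {p : TreeLikeTableau × ℕ} :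
    p ∈ PF1 n k ↔ p.1 ∈ BF (n - 1) k ∧ p.2 ∈ colsOcc p.1 := by
  unfold PF1
  rw [Finset.mem_biUnion]
  constructor
  · rintro ⟨T, hT, ha⟩
    obtain ⟨c, hc, rfl⟩ := Finset.mem_image.1 ha
    exact ⟨hT, hc⟩
  · rintro ⟨h1, h2⟩
    exact ⟨p.1, h1, Finset.mem_image.2 ⟨p.2, h2, rfl⟩⟩

lemma mem_PF2 {n k : ℕ} {p : TreeLikeTableau × ℕ} :
    p ∈ PF2 n k ↔ p.1 ∈ BF (n - 1) (k - 1) ∧ p.2 ∈ colsNot p.1 := by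
  unfold PF2
  rw [Finset.mem_biUnion]
  constructor
  · rintro ⟨T, hT, ha⟩
    obtain ⟨c, hc, rfl⟩ := Finset.mem_image.1 ha
    exact ⟨hT, hc⟩
  · rintro ⟨h1, h2⟩
    exact ⟨p.1, h1, Finset.mem_image.2 ⟨p.2, h2, rfl⟩⟩

lemma card_XF {n k : ℕ} (hn : 1 ≤ n) : (XF n k).card = k * (BF n k).card := by
  unfold XF
  rw [Finset.card_biUnion (biUnion_disj _ _)]
  rw [Finset.sum_congr rfl (g := fun _ => k)]
  · rw [Finset.sum_const, smul_eq_mul, mul_comm]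
  · intro T hT
    obtain ⟨hsize, hsym, hoc⟩ := mem_BF.1 hT
    rw [Finset.card_image_of_injective _ (fun c c' h => (Prod.mk.injEq .. ▸ h).2)]
    exact card_AC_eq hsym (by omega) hoc

lemma card_PF1 {n k : ℕ} : (PF1 n k).card = 2 * k * (BF (n - 1) k).card := by
  unfold PF1
  rw [Finset.card_biUnion (biUnion_disj _ _)]
  rw [Finset.sum_congr rfl (g := fun _ => 2 * k)]
  · rw [Finset.sum_const, smul_eq_mul, mul_comm]
  · intro T hT
    obtain ⟨hsize, hsym, hoc⟩ := mem_BF.1 hT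
    rw [Finset.card_image_of_injective _ (fun c c' h => (Prod.mk.injEq .. ▸ h).2)]
    rw [card_colsOcc, hoc]

lemma card_PF2 {n k : ℕ} (hn : 1 ≤ n) : (PF2 n k).card = (n - 2 * (k - 1)) * (BF (n - 1) (k - 1)).card := by
  unfold PF2
  rw [Finset.card_biUnion (biUnion_disj _ _)]
  rw [Finset.sum_congr rfl (g := fun _ => n - 2 * (k - 1))]
  · rw [Finset.sum_const, smul_eq_mul, mul_comm]
  · intro T hT
    obtain ⟨hsize, hsym, hoc⟩ := mem_BF.1 hT
    rw [Finset.card_image_of_injective _ (fun c c' h => (Prod.mk.injEq .. ▸ h).2)]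
    have h1 := card_cols_split T
    rw [rowLen0_eq hsym hsize, hoc] at h1
    omega

lemma twok_le_n {n k : ℕ} (hNE : (BF (n - 1) (k - 1)).Nonempty) (hn : 1 ≤ n) :
    2 * (k - 1) ≤ n := by
  obtain ⟨T, hT⟩ := hNE
  obtain ⟨hsize, hsym, hoc⟩ := mem_BF.1 hT
  have h1 := card_cols_split T
  rw [rowLen0_eq hsym hsize, hoc] at h1
  omega

lemma PF_disjoint {n k : ℕ} (hk : 1 ≤ k) : Disjoint (PF1 n k) (PF2 n k) := by
  rw [Finset.disjoint_left]
  intro p hp hq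
  obtain ⟨h1, _⟩ := mem_PF1.1 hp
  obtain ⟨h2, _⟩ := mem_PF2.1 hq
  obtain ⟨_, _, hoc1⟩ := mem_BF.1 h1
  obtain ⟨_, _, hoc2⟩ := mem_BF.1 h2
  omega

end TLTaux


namespace TLTaux

open TreeLikeTableau

attribute [local instance] Classical.propDecidable

variable {n k : ℕ}

lemma XF_sym {a : TreeLikeTableau × (ℕ × ℕ)} (ha : a ∈ XF n k) : a.1.IsSymmetric :=
  (mem_BF.1 (mem_XF.1 ha).1).2.1

lemma XF_card2 (hn : 1 ≤ n) {a : TreeLikeTableau × (ℕ × ℕ)} (ha : a ∈ XF n k) :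
    2 ≤ a.1.points.card := by
  have := (mem_BF.1 (mem_XF.1 ha).1).1
  omega

lemma XF_ac {a : TreeLikeTableau × (ℕ × ℕ)} (ha : a ∈ XF n k) : a.2 ∈ a.1.AC :=
  (mem_XF.1 ha).2

lemma PFU_sym {p : TreeLikeTableau × ℕ} (hp : p ∈ PF1 n k ∪ PF2 n k) : p.1.IsSymmetric := by
  rcases Finset.mem_union.1 hp with h | h
  · exact (mem_BF.1 (mem_PF1.1 h).1).2.1
  · exact (mem_BF.1 (mem_PF2.1 h).1).2.1

lemma PFU_hcol {p : TreeLikeTableau × ℕ} (hp : p ∈ PF1 n k ∪ PF2 n k) :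
    (0, p.2) ∈ p.1.shape := by
  rw [YoungDiagram.mem_iff_lt_rowLen]
  rcases Finset.mem_union.1 hp with h | h
  · have := (mem_PF1.1 h).2
    unfold colsOcc at this
    rw [Finset.mem_filter, Finset.mem_range] at this
    exact this.1
  · have := (mem_PF2.1 h).2
    unfold colsNot at this
    rw [Finset.mem_filter, Finset.mem_range] at this
    exact this.1

lemma hi_lemma (hn : 2 ≤ n) (hk : 1 ≤ k) {a : TreeLikeTableau × (ℕ × ℕ)} (ha : a ∈ XF n k)
    (h1 : a.1.IsSymmetric) (h2 : 2 ≤ a.1.points.card) (h3 : a.2 ∈ a.1.AC) :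
    (delT h1 h2 h3, fD a.2.1 a.2.2) ∈ PF1 n k ∪ PF2 n k := by
  obtain ⟨hBF, -⟩ := mem_XF.1 ha
  obtain ⟨hsize, hsym, hoc⟩ := mem_BF.1 hBF
  have hsize' := delT_size h1 h2 h3
  have hcard' : 2 ≤ (delT h1 h2 h3).points.card := by omega
  have hoc' := ins_oc_eq (delT_sym h1 h2 h3) (delT_hcol h1 h2 h3) hcard'
  rw [ins_delT h1 h2 h3] at hoc'
  have hcol' : fD a.2.1 a.2.2 ∈ Finset.range ((delT h1 h2 h3).shape.rowLen 0) := by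
    rw [Finset.mem_range, ← YoungDiagram.mem_iff_lt_rowLen]
    exact delT_hcol h1 h2 h3
  by_cases hB : B1 (delT h1 h2 h3) (fD a.2.1 a.2.2) ∈ (delT h1 h2 h3).occCorners
  · apply Finset.mem_union_left
    rw [mem_PF1]
    constructor
    · rw [mem_BF]
      refine ⟨?_, delT_sym h1 h2 h3, ?_⟩
      · show (delT h1 h2 h3).points.card = 2 * (n - 1) + 1
        omega
      · show (delT h1 h2 h3).oc = 2 * k
        rw [if_pos hB, hoc] at hoc'
        omega
    · unfold colsOcc
      rw [Finset.mem_filter]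
      exact ⟨hcol', hB⟩
  · apply Finset.mem_union_right
    rw [mem_PF2]
    constructor
    · rw [mem_BF]
      refine ⟨?_, delT_sym h1 h2 h3, ?_⟩
      · show (delT h1 h2 h3).points.card = 2 * (n - 1) + 1
        omega
      · show (delT h1 h2 h3).oc = 2 * (k - 1)
        rw [if_neg hB, hoc] at hoc'
        omega
    · unfold colsNot
      rw [Finset.mem_filter]
      exact ⟨hcol', hB⟩

lemma hj_lemma (hn : 2 ≤ n) (hk : 1 ≤ k) {p : TreeLikeTableau × ℕ}
    (hp : p ∈ PF1 n k ∪ PF2 n k) (h1 : p.1.IsSymmetric) (h2 : (0, p.2) ∈ p.1.shape) :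
    (ins h1 h2, (M p.1 p.2, Q p.1 p.2)) ∈ XF n k := by
  rw [mem_XF]
  refine ⟨?_, newpt_AC h1 h2⟩
  rw [mem_BF]
  rcases Finset.mem_union.1 hp with h | h
  · obtain ⟨hBF, hcOcc⟩ := mem_PF1.1 h
    obtain ⟨hsize, hsym, hoc⟩ := mem_BF.1 hBF
    have hcard : 2 ≤ p.1.points.card := by omega
    have hB : B1 p.1 p.2 ∈ p.1.occCorners := by
      unfold colsOcc at hcOcc
      exact (Finset.mem_filter.1 hcOcc).2
    have hoc' := ins_oc_eq h1 h2 hcard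
    rw [if_pos hB, hoc] at hoc'
    refine ⟨?_, ins_sym h1 h2, ?_⟩
    · show (ins h1 h2).points.card = 2 * n + 1
      rw [ins_size]; omega
    · show (ins h1 h2).oc = 2 * k
      omega
  · obtain ⟨hBF, hcOcc⟩ := mem_PF2.1 h
    obtain ⟨hsize, hsym, hoc⟩ := mem_BF.1 hBF
    have hcard : 2 ≤ p.1.points.card := by omega
    have hB : B1 p.1 p.2 ∉ p.1.occCorners := by
      unfold colsNot at hcOcc
      exact (Finset.mem_filter.1 hcOcc).2
    have hoc' := ins_oc_eq h1 h2 hcard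
    rw [if_neg hB, hoc] at hoc'
    refine ⟨?_, ins_sym h1 h2, ?_⟩
    · show (ins h1 h2).points.card = 2 * n + 1
      rw [ins_size]; omega
    · show (ins h1 h2).oc = 2 * k
      omega

lemma li_lemma {a : TreeLikeTableau × (ℕ × ℕ)}
    (h1 : a.1.IsSymmetric) (h2 : 2 ≤ a.1.points.card) (h3 : a.2 ∈ a.1.AC)
    (h4 : (delT h1 h2 h3).IsSymmetric)
    (h5 : (0, fD a.2.1 a.2.2) ∈ (delT h1 h2 h3).shape) :
    ((ins h4 h5, (M (delT h1 h2 h3) (fD a.2.1 a.2.2), Q (delT h1 h2 h3) (fD a.2.1 a.2.2))) :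
        TreeLikeTableau × (ℕ × ℕ)) = a := by
  rw [Prod.ext_iff]
  constructor
  · exact ins_delT h1 h2 h3
  · show (M (delT h1 h2 h3) (fD a.2.1 a.2.2), Q (delT h1 h2 h3) (fD a.2.1 a.2.2)) = a.2
    rw [Prod.ext_iff]
    exact ⟨delT_M h1 h2 h3, delT_Q h1 h2 h3⟩

lemma ri_lemma {p : TreeLikeTableau × ℕ}
    (h1 : p.1.IsSymmetric) (h2 : (0, p.2) ∈ p.1.shape)
    (h3 : (ins h1 h2).IsSymmetric) (h4 : 2 ≤ (ins h1 h2).points.card)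
    (h5 : ((M p.1 p.2, Q p.1 p.2) : ℕ × ℕ) ∈ (ins h1 h2).AC) :
    ((delT h3 h4 h5, fD (M p.1 p.2) (Q p.1 p.2)) : TreeLikeTableau × ℕ) = p := by
  rw [Prod.ext_iff]
  constructor
  · exact delT_ins h1 h2
  · exact fD_Q (T := p.1) (col := p.2)

lemma card_X_eq_P (hn : 2 ≤ n) (hk : 1 ≤ k) :
    (XF n k).card = (PF1 n k ∪ PF2 n k).card := by
  have hn1 : 1 ≤ n := by omega
  apply Finset.card_bij'
    (i := fun a ha => (delT (XF_sym ha) (XF_card2 hn1 ha) (XF_ac ha), fD a.2.1 a.2.2))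
    (j := fun p hp => (ins (PFU_sym hp) (PFU_hcol hp), (M p.1 p.2, Q p.1 p.2)))
  · intro a ha
    exact li_lemma (XF_sym ha) (XF_card2 hn1 ha) (XF_ac ha)
      (delT_sym (XF_sym ha) (XF_card2 hn1 ha) (XF_ac ha))
      (delT_hcol (XF_sym ha) (XF_card2 hn1 ha) (XF_ac ha))
  · intro p hp
    exact ri_lemma (PFU_sym hp) (PFU_hcol hp) (ins_sym (PFU_sym hp) (PFU_hcol hp))
      (ins_card2 (PFU_sym hp) (PFU_hcol hp)) (newpt_AC (PFU_sym hp) (PFU_hcol hp))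
  · intro a ha
    exact hi_lemma hn hk ha (XF_sym ha) (XF_card2 hn1 ha) (XF_ac ha)
  · intro p hp
    exact hj_lemma hn hk hp (PFU_sym hp) (PFU_hcol hp)

end TLTaux

/-- The recurrence `2k·b_{n,k} = 2(2k·b_{n-1,k} + (n - 2(k-1))·b_{n-1,k-1})`
for `n ≥ 2` and `k ≥ 1`. -/
theorem occupied_corners_recurrence_symmetric (n k : ℕ) (hn : 2 ≤ n) (hk : 1 ≤ k) :
    2 * (k : ℤ) * b n k =
      2 * (2 * k * b (n - 1) k + ((n : ℤ) - 2 * ((k : ℤ) - 1)) * b (n - 1) (k - 1)) := by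
  classical
  have hn1 : 1 ≤ n := by omega
  have e1 := TLTaux.card_XF (n := n) (k := k) hn1
  have e2 := TLTaux.card_X_eq_P hn hk
  have e3 := Finset.card_union_of_disjoint (TLTaux.PF_disjoint (n := n) hk)
  have e4 := TLTaux.card_PF1 (n := n) (k := k)
  have e5 := TLTaux.card_PF2 (n := n) (k := k) hn1
  have key : k * (TLTaux.BF n k).card =
      2 * k * (TLTaux.BF (n - 1) k).card +
        (n - 2 * (k - 1)) * (TLTaux.BF (n - 1) (k - 1)).card := by
    rw [← e1, e2, e3, e4, e5]
  rw [TLTaux.b_eq_card, TLTaux.b_eq_card, TLTaux.b_eq_card]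
  rcases Finset.eq_empty_or_nonempty (TLTaux.BF (n - 1) (k - 1)) with hE | hNE
  · rw [hE] at key ⊢
    simp only [Finset.card_empty, mul_zero, add_zero, Nat.cast_zero] at key ⊢
    have keyZ : (k : ℤ) * (TLTaux.BF n k).card = 2 * k * (TLTaux.BF (n - 1) k).card := by
      exact_mod_cast congrArg (Nat.cast : ℕ → ℤ) key
    linear_combination 2 * keyZ
  · have h2k : 2 * (k - 1) ≤ n := TLTaux.twok_le_n hNE hn1
    have keyZ := congrArg (Nat.cast : ℕ → ℤ) key
    push_cast [Nat.cast_sub h2k, Nat.cast_sub hk] at keyZ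
    have hcast : ((n : ℤ) - 2 * ((k : ℤ) - 1)) = ((n : ℤ) - 2 * ((k : ℤ) - 1)) := rfl
    have : ((n : ℤ) - 2 * ((k : ℤ) - 1)) * ((TLTaux.BF (n - 1) (k - 1)).card : ℤ) =
        ((n : ℤ) - 2 * (((k : ℕ) : ℤ) - 1)) * ((TLTaux.BF (n - 1) (k - 1)).card : ℤ) := rfl
    linear_combination 2 * keyZ
end

section
/- Let P be a lattice path with unit East and North steps that begins with an East step followed by a North step and ends with an East step followed by a North step. Then the number of lattice paths from the start point to the end point of P lying weakly below P equals Σ_{P' weakly below P} cc(P'), where cc(P') is the number of corners (an East step immediately followed by a North step) that P' has in common with P. -/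
/-! Lattice paths with unit East and North steps, encoded as `List Bool`
where `false` is an East step and `true` is a North step, read from the
starting (Southwest) point. -/

/-- `heightsAux p k` lists, for each East step of `p`, the number of North
steps preceding it, starting from initial height `k`. -/
def heightsAux : List Bool → ℕ → List ℕ
  | [], _ => []
  | false :: rest, k => k :: heightsAux rest k
  | true :: rest, k => heightsAux rest (k + 1)

/-- The list of heights at which the successive East steps of `p` occur. -/
def heights (p : List Bool) : List ℕ := heightsAux p 0

/-- Number of East steps. -/
def countE (p : List Bool) : ℕ := p.count false

/-- Number of North steps. -/
def countN (p : List Bool) : ℕ := p.count true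

/-- `p` is weakly below `q`: same endpoints, and each East step of `p` occurs
at a height not exceeding that of the corresponding East step of `q`. -/
def WeaklyBelow (p q : List Bool) : Prop :=
  countE p = countE q ∧ countN p = countN q ∧
    List.Forall₂ (· ≤ ·) (heights p) (heights q)

/-- The path `p` has a corner (an East step immediately followed by a North
step) at its `i`-th East step (0-based). -/
def PathCorner (p : List Bool) (i : ℕ) : Prop :=
  (i + 1 = (heights p).length ∧ (heights p).getD i 0 < countN p) ∨
  (i + 1 < (heights p).length ∧ (heights p).getD i 0 < (heights p).getD (i + 1) 0)

/-- `p` and `q` have a common corner at their `i`-th East step: both have a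
corner there and these corners are at the same location in the plane. -/
def CommonCorner (q p : List Bool) (i : ℕ) : Prop :=
  PathCorner p i ∧ PathCorner q i ∧ (heights p).getD i 0 = (heights q).getD i 0

/-- `cc q p` is the number of corners that `p` and `q` have in common. -/
noncomputable def cc (p q : List Bool) : ℕ :=
  Set.ncard {i : ℕ | CommonCorner q p i}

/-! Encode a path by the weakly increasing sequence of the heights of its East steps. The paths
weakly below `P` become the sequences dominated termwise by the heights `0 :: h` of `P`, and a
common corner at step `i` means `g i = h i < g (i + 1)`, where the height after the last step is
the number `n` of North steps; all heights of `P` are below `n` since `P` ends with a North step.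

For sequences bounded below by `c ≤ a`, the number of common corners summed over the sequences
below `a :: h` is the number of sequences below `h`. Split on the first entry `v ∈ [c, a]`: a
corner at the first step forces `v = a` and a second entry above `a`, which accounts for the
sequences below `h` starting above `a`, and by induction the later corners account for those
starting in `[c, a]`. -/

open Finset

def heightsBelow : ℕ → List ℕ → Finset (List ℕ)
  | _, [] => {[]}
  | c, a :: h =>
    (Ico c (a + 1)).biUnion fun v => (heightsBelow v h).map ⟨(v :: ·), List.cons_injective⟩

theorem mem_heightsBelow {c : ℕ} {g h : List ℕ} :
    g ∈ heightsBelow c h ↔ List.IsChain (· ≤ ·) (c :: g) ∧ List.Forall₂ (· ≤ ·) g h := by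
  induction h generalizing c g with
  | nil => cases g <;> simp [heightsBelow]
  | cons a h ih =>
    cases g with
    | nil => simp [heightsBelow]
    | cons v g =>
      simp only [heightsBelow, mem_biUnion, mem_Ico, mem_map, Function.Embedding.coeFn_mk,
        List.cons.injEq, List.isChain_cons_cons, List.forall₂_cons, ih]
      constructor
      · rintro ⟨w, hw, g', ⟨hch, hle⟩, rfl, rfl⟩
        exact ⟨⟨hw.1, hch⟩, by omega, hle⟩
      · rintro ⟨⟨hcv, hch⟩, hva, hle⟩
        exact ⟨v, ⟨hcv, by omega⟩, g, ⟨hch, hle⟩, rfl, rfl⟩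

theorem sum_heightsBelow_cons {M : Type*} [AddCommMonoid M] (f : List ℕ → M) (c a : ℕ)
    (h : List ℕ) :
    ∑ g ∈ heightsBelow c (a :: h), f g =
      ∑ v ∈ Ico c (a + 1), ∑ g ∈ heightsBelow v h, f (v :: g) := by
  rw [heightsBelow, sum_biUnion]
  · simp only [sum_map, Function.Embedding.coeFn_mk]
  · intro v _ w _ hvw
    simp only [Function.onFun, disjoint_left, mem_map, Function.Embedding.coeFn_mk]
    rintro _ ⟨g, -, rfl⟩ ⟨g', -, hg'⟩
    exact hvw (List.cons_eq_cons.mp hg').1.symm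

theorem card_heightsBelow_cons (c a : ℕ) (h : List ℕ) :
    #(heightsBelow c (a :: h)) = ∑ v ∈ Ico c (a + 1), #(heightsBelow v h) := by
  simpa only [card_eq_sum_ones] using sum_heightsBelow_cons (fun _ => 1) c a h

theorem filter_lt_headD_heightsBelow {c n : ℕ} (hcn : c < n) (h : List ℕ) :
    {g ∈ heightsBelow c h | c < g.headD n} = heightsBelow (c + 1) h := by
  ext g
  cases g with
  | nil => simp [mem_heightsBelow, hcn]
  | cons v g =>
    simp only [mem_filter, mem_heightsBelow, List.isChain_cons_cons, List.headD_cons]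
    grind

/-- `getD (i + 1) n` reads the height after the last East step as `n`, the number of North
steps. -/
def IsCommonCorner (n : ℕ) (g h : List ℕ) (i : ℕ) : Prop :=
  i < h.length ∧ g.getD i 0 = h.getD i 0 ∧
    g.getD i 0 < g.getD (i + 1) n ∧ h.getD i 0 < h.getD (i + 1) n

instance (n : ℕ) (g h : List ℕ) : DecidablePred (IsCommonCorner n g h) :=
  fun _ => by unfold IsCommonCorner; infer_instance

def commonCorners (n : ℕ) (g h : List ℕ) : ℕ :=
  #{i ∈ range h.length | IsCommonCorner n g h i}

theorem commonCorners_nil_right (n : ℕ) (g : List ℕ) : commonCorners n g [] = 0 := by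
  simp [commonCorners]

theorem commonCorners_cons (n v a : ℕ) (g h : List ℕ) :
    commonCorners n (v :: g) (a :: h) =
      commonCorners n g h + if v = a ∧ v < g.headD n ∧ a < h.headD n then 1 else 0 := by
  have hzero : IsCommonCorner n (v :: g) (a :: h) 0 ↔ v = a ∧ v < g.headD n ∧ a < h.headD n := by
    simp [IsCommonCorner, ← List.head?_eq_getElem?]
  have hsucc (i : ℕ) : IsCommonCorner n (v :: g) (a :: h) (i + 1) ↔ IsCommonCorner n g h i := by
    simp [IsCommonCorner]
  simp only [commonCorners, card_filter, List.length_cons, sum_range_succ', hzero, hsucc]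

theorem headD_le_headD_of_forall₂ {g h : List ℕ} (hgh : List.Forall₂ (· ≤ ·) g h) (n : ℕ) :
    g.headD n ≤ h.headD n := by
  cases hgh with
  | nil => rfl
  | cons hvb _ => exact hvb

theorem sum_commonCorners_heightsBelow_cons {n c a : ℕ} (hca : c ≤ a) (ha : a < n)
    (h : List ℕ) :
    ∑ g ∈ heightsBelow c (a :: h), commonCorners n g (a :: h) =
      ∑ v ∈ Ico c (a + 1), ∑ g ∈ heightsBelow v h, commonCorners n g h +
        #(heightsBelow (a + 1) h) := by
  simp only [sum_heightsBelow_cons, commonCorners_cons, sum_add_distrib]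
  congr 1
  have hcorner (v : ℕ) : ∑ g ∈ heightsBelow v h,
      (if v = a ∧ v < g.headD n ∧ a < h.headD n then 1 else 0) =
        if v = a then #(heightsBelow (a + 1) h) else 0 := by
    split_ifs with hva
    · subst hva
      rw [← filter_lt_headD_heightsBelow ha, card_filter]
      refine sum_congr rfl fun g hg => if_congr ?_ rfl rfl
      have := headD_le_headD_of_forall₂ (mem_heightsBelow.mp hg).2 n
      omega
    · exact sum_eq_zero fun g _ => if_neg fun hc => hva hc.1
  rw [sum_congr rfl fun v _ => hcorner v, sum_ite_eq', if_pos (by simp [hca])]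

theorem sum_commonCorners_heightsBelow {n : ℕ} {h : List ℕ} {c a : ℕ} (hca : c ≤ a)
    (hchain : List.IsChain (· ≤ ·) (a :: h)) (hlt : ∀ x ∈ a :: h, x < n) :
    ∑ g ∈ heightsBelow c (a :: h), commonCorners n g (a :: h) = #(heightsBelow c h) := by
  induction h generalizing c a with
  | nil =>
    rw [sum_commonCorners_heightsBelow_cons hca (hlt a List.mem_cons_self)]
    simp [heightsBelow, commonCorners_nil_right]
  | cons b h ih =>
    rw [List.isChain_cons_cons] at hchain
    have hlt' : ∀ x ∈ b :: h, x < n := fun x hx => hlt x (List.mem_cons_of_mem a hx)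
    rw [sum_commonCorners_heightsBelow_cons hca (hlt a List.mem_cons_self),
      card_heightsBelow_cons, card_heightsBelow_cons,
      sum_congr rfl fun v hv => ih (by rw [mem_Ico] at hv; omega) hchain.2 hlt']
    exact sum_Ico_consecutive _ (by omega) (by omega)

theorem heightsAux_append (s t : List Bool) (k : ℕ) :
    heightsAux (s ++ t) k = heightsAux s k ++ heightsAux t (k + countN s) := by
  induction s generalizing k with
  | nil => simp [heightsAux, countN]
  | cons b s ih =>
    cases b <;> simp [heightsAux, ih, countN, Nat.add_assoc, Nat.add_comm 1]

theorem length_heightsAux (p : List Bool) (k : ℕ) : (heightsAux p k).length = countE p := by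
  induction p generalizing k with
  | nil => simp [heightsAux, countE]
  | cons b p ih => cases b <;> simp [heightsAux, ih, countE]

theorem isChain_heightsAux (p : List Bool) (k : ℕ) :
    List.IsChain (· ≤ ·) (k :: heightsAux p k) := by
  induction p generalizing k with
  | nil => exact List.isChain_singleton k
  | cons b p ih =>
    cases b
    · exact List.IsChain.cons_cons le_rfl (ih k)
    · have hchain := ih (k + 1)
      rw [heightsAux]
      cases hl : heightsAux p (k + 1) with
      | nil => exact List.isChain_singleton k
      | cons v l =>
        rw [hl, List.isChain_cons_cons] at hchain
        exact List.IsChain.cons_cons (by omega) hchain.2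

theorem le_of_mem_heightsAux {p : List Bool} {k x : ℕ} (hx : x ∈ heightsAux p k) :
    x ≤ k + countN p := by
  induction p generalizing k with
  | nil => simp [heightsAux] at hx
  | cons b p ih =>
    cases b <;> simp only [heightsAux] at hx
    · rcases List.mem_cons.mp hx with rfl | hx
      · simp
      · simpa [countN] using ih hx
    · have := ih hx
      simp only [countN, List.count_cons_self] at this ⊢
      omega

theorem pathCorner_iff {p : List Bool} {i : ℕ} :
    PathCorner p i ↔
      i < (heights p).length ∧ (heights p).getD i 0 < (heights p).getD (i + 1) (countN p) := by
  rw [PathCorner]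
  rcases lt_trichotomy (i + 1) (heights p).length with hi | hi | hi
  · simp [hi, hi.ne, Nat.lt_of_succ_lt hi]
  · simp [hi]
    omega
  · simp [hi.ne', Nat.not_lt_of_gt hi]
    omega

theorem cc_eq_commonCorners {p q : List Bool} (hN : countN p = countN q)
    (hlen : (heights p).length = (heights q).length) :
    cc p q = commonCorners (countN q) (heights p) (heights q) := by
  rw [cc, commonCorners, ← Set.ncard_coe_finset]
  congr 1
  ext i
  simp only [mem_coe, mem_filter, mem_range, Set.mem_ofPred_eq]
  simp only [CommonCorner, pathCorner_iff, IsCommonCorner, hN, hlen]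
  tauto

/-- The path from height `k` to height `n` whose East steps occur at the heights `g`. -/
def ofHeights : List ℕ → ℕ → ℕ → List Bool
  | [], k, n => List.replicate (n - k) true
  | v :: g, k, n => List.replicate (v - k) true ++ false :: ofHeights g v n

theorem heightsAux_replicate_true (j k : ℕ) : heightsAux (List.replicate j true) k = [] := by
  induction j generalizing k with
  | zero => rfl
  | succ j ih => simp [List.replicate_succ, heightsAux, ih]

theorem heightsAux_ofHeights {g : List ℕ} {k : ℕ} (hg : List.IsChain (· ≤ ·) (k :: g)) (n : ℕ) :
    heightsAux (ofHeights g k n) k = g := by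
  induction g generalizing k with
  | nil => exact heightsAux_replicate_true _ _
  | cons v g ih =>
    rw [List.isChain_cons_cons] at hg
    simp [ofHeights, heightsAux_append, heightsAux_replicate_true, countN, heightsAux,
      Nat.add_sub_cancel' hg.1, ih hg.2]

theorem countN_ofHeights {g : List ℕ} {k n : ℕ} (hg : List.IsChain (· ≤ ·) (k :: g))
    (hn : ∀ x ∈ k :: g, x ≤ n) : countN (ofHeights g k n) = n - k := by
  induction g generalizing k with
  | nil => simp [ofHeights, countN]
  | cons v g ih =>
    rw [List.isChain_cons_cons] at hg
    have hv := hn v (by simp)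
    have hk := hn k List.mem_cons_self
    have := ih hg.2 (fun x hx => hn x (List.mem_cons_of_mem k hx))
    simp only [countN] at this ⊢
    simp [ofHeights, this]
    omega

theorem countE_ofHeights (g : List ℕ) (k n : ℕ) : countE (ofHeights g k n) = g.length := by
  induction g generalizing k with
  | nil => simp [ofHeights, countE, List.count_replicate]
  | cons v g ih => simp [ofHeights, countE, List.count_replicate, ← ih v]

theorem ofHeights_eq_cons_true {g : List ℕ} {k n : ℕ} (hg : List.IsChain (· ≤ ·) ((k + 1) :: g))
    (hk : k < n) : ofHeights g k n = true :: ofHeights g (k + 1) n := by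
  cases g with
  | nil => rw [ofHeights, ofHeights, show n - k = n - (k + 1) + 1 by omega, List.replicate_succ]
  | cons v g =>
    have hv := (List.isChain_cons_cons.mp hg).1
    rw [ofHeights, ofHeights, show v - k = v - (k + 1) + 1 by omega, List.replicate_succ,
      List.cons_append]

theorem ofHeights_heightsAux (p : List Bool) (k : ℕ) :
    ofHeights (heightsAux p k) k (k + countN p) = p := by
  induction p generalizing k with
  | nil => simp [heightsAux, ofHeights, countN]
  | cons b p ih =>
    cases b
    · simpa [heightsAux, ofHeights, countN] using ih k
    · have hchain := isChain_heightsAux p (k + 1)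
      rw [heightsAux, show k + countN (true :: p) = k + 1 + countN p by simp [countN]; omega,
        ofHeights_eq_cons_true hchain (by omega), ih]

theorem injOn_heights (n : ℕ) : Set.InjOn heights {p | countN p = n} := by
  intro p hp q hq hpq
  rw [← ofHeights_heightsAux p 0, ← ofHeights_heightsAux q 0]
  simp_all [heights]

theorem forall_le_of_forall₂ {g h : List ℕ} (hgh : List.Forall₂ (· ≤ ·) g h) {n : ℕ}
    (hh : ∀ y ∈ h, y ≤ n) : ∀ x ∈ g, x ≤ n := by
  induction hgh with
  | nil => simp
  | cons hvb _ ih =>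
    simp only [List.mem_cons, forall_eq_or_imp] at hh ⊢
    exact ⟨hvb.trans hh.1, ih hh.2⟩

theorem image_heights_eq_heightsBelow {P : List Bool} {S : Finset (List Bool)}
    (hS : ∀ p, p ∈ S ↔ WeaklyBelow p P) : S.image heights = heightsBelow 0 (heights P) := by
  ext g
  simp only [mem_image, hS, mem_heightsBelow]
  constructor
  · rintro ⟨p, hp, rfl⟩
    exact ⟨isChain_heightsAux p 0, hp.2.2⟩
  · rintro ⟨hchain, hle⟩
    have hbound : ∀ x ∈ 0 :: g, x ≤ countN P := by
      simpa using forall_le_of_forall₂ hle fun y hy => by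
        simpa using le_of_mem_heightsAux (k := 0) hy
    have hheights : heights (ofHeights g 0 (countN P)) = g := heightsAux_ofHeights hchain _
    refine ⟨ofHeights g 0 (countN P), ⟨?_, ?_, hheights.symm ▸ hle⟩, hheights⟩
    · rw [countE_ofHeights, hle.length_eq, heights, length_heightsAux]
    · rw [countN_ofHeights hchain hbound, Nat.sub_zero]

theorem lt_countN_of_mem_heights {s : List Bool} {x : ℕ} (hx : x ∈ heights (s ++ [true])) :
    x < countN (s ++ [true]) := by
  rw [heights, heightsAux_append, heightsAux, heightsAux, List.append_nil] at hx
  have := le_of_mem_heightsAux hx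
  simp only [countN, List.count_append, List.count_singleton_self] at this ⊢
  omega

/-- For a lattice path `P` beginning and ending with a corner (an East step
followed by a North step), the number of lattice paths weakly below `P`
equals the sum over the paths `P'` weakly below `P` of the number of corners
`P'` and `P` have in common. -/
theorem paths_below_eq_sum_common_corners (P : List Bool)
    (hstart : P.take 2 = [false, true]) (hend : P.reverse.take 2 = [true, false])
    (S : Finset (List Bool)) (hS : ∀ p, p ∈ S ↔ WeaklyBelow p P) :
    S.card = ∑ p ∈ S, cc p P := by
  obtain ⟨s, hs⟩ : ∃ s, P = s ++ [true] := by
    obtain ⟨t, ht⟩ : ∃ t, P.reverse = true :: t := by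
      rcases hP : P.reverse with _ | ⟨_ | _, t⟩ <;> simp [hP] at hend ⊢
    exact ⟨t.reverse, List.reverse_eq_cons_iff.mp ht⟩
  obtain ⟨rest, rfl⟩ : ∃ rest, P = false :: rest := by
    rcases P with _ | ⟨_ | _, _⟩ <;> simp at hstart ⊢
  set n := countN (false :: rest)
  set h := heightsAux rest 0
  have hheights : heights (false :: rest) = 0 :: h := rfl
  have hchain : List.IsChain (· ≤ ·) (0 :: h) := hheights ▸ (isChain_heightsAux _ 0).tail
  have hlt : ∀ x ∈ 0 :: h, x < n := fun x hx => by
    rw [← hheights, hs] at hx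
    simpa [n, hs] using lt_countN_of_mem_heights hx
  have hinj : Set.InjOn heights S := (injOn_heights n).mono fun p hp => ((hS p).mp hp).2.1
  calc S.card = #(heightsBelow 0 h) := by
        rw [← card_image_of_injOn hinj, image_heights_eq_heightsBelow hS, hheights,
          card_heightsBelow_cons, Nat.Ico_succ_singleton, sum_singleton]
    _ = ∑ g ∈ heightsBelow 0 (0 :: h), commonCorners n g (0 :: h) :=
        (sum_commonCorners_heightsBelow le_rfl hchain hlt).symm
    _ = ∑ p ∈ S, cc p (false :: rest) := by
        rw [← hheights, ← image_heights_eq_heightsBelow hS, sum_image hinj]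
        refine sum_congr rfl fun p hp => (cc_eq_commonCorners ?_ ?_).symm
        · exact ((hS p).mp hp).2.1
        · exact ((hS p).mp hp).2.2.length_eq
end

section
/- In every non-ambiguous class of tree-like tableaux of size n, the total number of occupied corners over the class equals the cardinality of the class. -/
open Polynomial

/-
A tableau of the class is determined by its column lengths, and these range over the antitone
sequences lying above the column lengths of the canonical representative (which are forced by the
points) with the same numbers of rows and columns. A tableau has an occupied corner in column `j`
exactly when its column `j` has canonical length and column `j + 1` is strictly shorter.
Lengthening every column to the right of `j` by one is then a bijection onto the tableaux whose
border touches the canonical border for the last time in column `j`. Every tableau has exactly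
one such last contact column, so summing over `j` counts the class.
-/

open Finset YoungDiagram

namespace YoungDiagram

def ofColLens (f : ℕ → ℕ) (hf : Antitone f) (c : ℕ) : YoungDiagram where
  cells := {p ∈ range (f 0) ×ˢ range c | p.1 < f p.2}
  isLowerSet := by
    rintro ⟨i, j⟩ ⟨i', j'⟩ ⟨hi : i' ≤ i, hj : j' ≤ j⟩ h
    have := hf hj
    have := hf (Nat.zero_le j')
    simp only [coe_filter, mem_product, mem_range, Set.mem_ofPred_eq] at h ⊢
    omega

variable {f : ℕ → ℕ} {hf : Antitone f} {c i j : ℕ}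

theorem mem_ofColLens : (i, j) ∈ ofColLens f hf c ↔ i < f j ∧ j < c := by
  have := hf (Nat.zero_le j)
  rw [← mem_cells]
  simp only [ofColLens, mem_filter, mem_product, mem_range]
  omega

theorem colLen_ofColLens (hj : j < c) : (ofColLens f hf c).colLen j = f j :=
  eq_of_forall_lt_iff fun i => by rw [← mem_iff_lt_colLen, mem_ofColLens]; simp [hj]

end YoungDiagram

namespace TreeLikeTableau

/-- Column lengths of the canonical representative of the class with point set `pts`. -/
def minColLen (pts : Finset (ℕ × ℕ)) (j : ℕ) : ℕ :=
  {p ∈ pts | j ≤ p.2}.sup fun p => p.1 + 1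

def numCols (pts : Finset (ℕ × ℕ)) : ℕ :=
  pts.sup fun p => p.2 + 1

section PointSet

variable {pts : Finset (ℕ × ℕ)} {i j k : ℕ}

theorem lt_minColLen (h : (i, k) ∈ pts) (hjk : j ≤ k) : i < minColLen pts j :=
  le_sup (f := fun p => p.1 + 1) (mem_filter.2 ⟨h, hjk⟩)

theorem lt_numCols (h : (i, j) ∈ pts) : j < numCols pts :=
  le_sup (f := fun p => p.2 + 1) h

theorem minColLen_eq_zero (hj : numCols pts ≤ j) : minColLen pts j = 0 :=
  Nat.le_zero.1 <| Finset.sup_le fun _ hp => by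
    have := lt_numCols (mem_filter.1 hp).1
    have := (mem_filter.1 hp).2
    omega

theorem minColLen_pos (hj : j < numCols pts) : 0 < minColLen pts j := by
  obtain ⟨⟨i, k⟩, hp, hjk⟩ := Finset.lt_sup_iff.1 hj
  exact (Nat.zero_le i).trans_lt (lt_minColLen hp (Nat.le_of_lt_succ hjk))

theorem mem_of_minColLen_succ_lt (h : minColLen pts (j + 1) < minColLen pts j) :
    (minColLen pts j - 1, j) ∈ pts := by
  obtain ⟨⟨i, k⟩, hmem, hi⟩ := Finset.lt_sup_iff.1 (Nat.sub_one_lt_of_lt h)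
  change minColLen pts j - 1 < i + 1 at hi
  obtain ⟨hp, hjk⟩ := mem_filter.1 hmem
  obtain rfl : k = j := by
    by_contra hne
    have := lt_minColLen hp (show j + 1 ≤ k by omega)
    omega
  obtain rfl : i = minColLen pts k - 1 := by
    have := lt_minColLen hp hjk
    omega
  exact hp

end PointSet

variable (T : TreeLikeTableau) {i j k : ℕ}

theorem numCols_pos : 0 < numCols T.points :=
  lt_numCols T.root_mem

theorem minColLen_le_colLen (j : ℕ) : minColLen T.points j ≤ T.shape.colLen j :=
  Finset.sup_le fun _ hp => mem_iff_lt_colLen.1 <|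
    T.shape.up_left_mem le_rfl (mem_filter.1 hp).2 (T.points_subset (mem_filter.1 hp).1)

theorem colLen_zero : T.shape.colLen 0 = minColLen T.points 0 := by
  refine le_antisymm (not_lt.1 fun h => ?_) (T.minColLen_le_colLen 0)
  obtain ⟨c, hc⟩ := T.no_empty_row _ 0 (mem_iff_lt_colLen.2 h)
  exact lt_irrefl _ (lt_minColLen hc (Nat.zero_le c))

theorem colLen_eq_zero (hj : numCols T.points ≤ j) : T.shape.colLen j = 0 := by
  by_contra h
  obtain ⟨r, hr⟩ := T.no_empty_col 0 j (mem_iff_lt_colLen.2 (Nat.pos_of_ne_zero h))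
  exact (lt_numCols hr).not_ge hj

theorem exists_mem_row (hi : i < minColLen T.points 0) : ∃ c, (i, c) ∈ T.points :=
  T.no_empty_row i 0 (mem_iff_lt_colLen.2 (T.colLen_zero ▸ hi))

theorem exists_mem_col (hj : j < numCols T.points) : ∃ r, (r, j) ∈ T.points :=
  T.no_empty_col 0 j (mem_iff_lt_colLen.2 ((minColLen_pos hj).trans_le (T.minColLen_le_colLen j)))

theorem ext_of_colLen {T T' : TreeLikeTableau} (hp : T.points = T'.points)
    (hc : ∀ j < numCols T.points, T.shape.colLen j = T'.shape.colLen j) : T = T' := by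
  have hcol (j : ℕ) : T.shape.colLen j = T'.shape.colLen j := by
    rcases lt_or_ge j (numCols T.points) with hj | hj
    · exact hc j hj
    · rw [T.colLen_eq_zero hj, T'.colLen_eq_zero (hp ▸ hj)]
  have hshape : T.shape = T'.shape :=
    SetLike.ext fun ⟨i, j⟩ => by simp only [mem_iff_lt_colLen, hcol]
  cases T
  cases T'
  subst hp hshape
  rfl

def withColLens (f : ℕ → ℕ) (hf : Antitone f) (hrows : f 0 ≤ minColLen T.points 0)
    (hpts : ∀ j, minColLen T.points j ≤ f j) : TreeLikeTableau where
  shape := ofColLens f hf (numCols T.points)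
  points := T.points
  points_subset := fun ⟨_, j⟩ hp => (mem_cells _).2 <|
    mem_ofColLens.2 ⟨(lt_minColLen hp le_rfl).trans_le (hpts j), lt_numCols hp⟩
  root_mem := T.root_mem
  point_cond := T.point_cond
  no_empty_row _ j h :=
    T.exists_mem_row (((mem_ofColLens.1 h).1.trans_le (hf (Nat.zero_le j))).trans_le hrows)
  no_empty_col _ _ h := T.exists_mem_col (mem_ofColLens.1 h).2

theorem colLen_withColLens {f : ℕ → ℕ} {hf hrows hpts} (hj : j < numCols T.points) :
    (T.withColLens f hf hrows hpts).shape.colLen j = f j :=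
  colLen_ofColLens (hf := hf) hj

section OccupiedCorners

def occCornerCols : Finset ℕ :=
  T.occCorners.image Prod.snd

theorem colLen_eq_of_mem_occCorners {p : ℕ × ℕ} (hp : p ∈ T.occCorners) :
    T.shape.colLen p.2 = p.1 + 1 := by
  have hin := mem_iff_lt_colLen.1 ((mem_cells _).1 (T.points_subset (mem_filter.1 hp).1))
  have hbelow := (mem_filter.1 hp).2.1
  rw [mem_cells, mem_iff_lt_colLen] at hbelow
  omega

theorem mem_occCornerCols_iff : j ∈ T.occCornerCols ↔
    T.shape.colLen j = minColLen T.points j ∧ T.shape.colLen (j + 1) < minColLen T.points j := by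
  constructor
  · intro hj
    obtain ⟨⟨i, j⟩, hp, rfl⟩ := mem_image.1 hj
    dsimp only
    have hcol : T.shape.colLen j = i + 1 := T.colLen_eq_of_mem_occCorners hp
    obtain ⟨hpt, -, hright⟩ := mem_filter.1 hp
    replace hright : ¬i < T.shape.colLen (j + 1) := by rwa [mem_cells, mem_iff_lt_colLen] at hright
    have := lt_minColLen hpt le_rfl
    have := T.minColLen_le_colLen j
    omega
  · rintro ⟨hj, hsucc⟩
    have hlt := (T.minColLen_le_colLen (j + 1)).trans_lt hsucc
    refine mem_image.2
      ⟨(minColLen T.points j - 1, j), mem_filter.2 ⟨mem_of_minColLen_succ_lt hlt, ?_⟩, rfl⟩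
    simp only [mem_cells, mem_iff_lt_colLen]
    omega

theorem lt_numCols_of_mem_occCornerCols (hj : j ∈ T.occCornerCols) : j < numCols T.points := by
  obtain ⟨p, hp, rfl⟩ := mem_image.1 hj
  exact lt_numCols (mem_filter.1 hp).1

theorem oc_eq_card_filter :
    T.oc = #{j ∈ range (numCols T.points) | j ∈ T.occCornerCols} := by
  have hsub : T.occCornerCols ⊆ range (numCols T.points) := fun j hj =>
    mem_range.2 (T.lt_numCols_of_mem_occCornerCols hj)
  have hinj : Set.InjOn Prod.snd (T.occCorners : Set (ℕ × ℕ)) := fun p hp q hq h => by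
    have hp' := T.colLen_eq_of_mem_occCorners hp
    have hq' := T.colLen_eq_of_mem_occCorners hq
    rw [h] at hp'
    exact Prod.ext (by omega) h
  rw [filter_mem_eq_inter, inter_eq_right.2 hsub, occCornerCols, card_image_of_injOn hinj, oc]

end OccupiedCorners

/-- The last column in which the border of `T` touches that of the canonical representative;
column `0` always qualifies. -/
def lastContactCol : ℕ :=
  Nat.findGreatest (fun j => T.shape.colLen j = minColLen T.points j) (numCols T.points - 1)

theorem lastContactCol_lt : T.lastContactCol < numCols T.points :=
  (Nat.findGreatest_le _).trans_lt (Nat.sub_one_lt_of_lt T.numCols_pos)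

theorem lastContactCol_eq_iff : T.lastContactCol = j ↔ j < numCols T.points ∧
    T.shape.colLen j = minColLen T.points j ∧
    ∀ k, j < k → k < numCols T.points → minColLen T.points k < T.shape.colLen k := by
  have hpos := T.numCols_pos
  rw [lastContactCol, Nat.findGreatest_eq_iff]
  constructor
  · rintro ⟨hj, hcontact, hlast⟩
    refine ⟨by omega, ?_, fun k hjk hk =>
      (T.minColLen_le_colLen k).lt_of_ne (Ne.symm (hlast hjk (by omega)))⟩
    rcases Nat.eq_zero_or_pos j with rfl | hj0
    · exact T.colLen_zero
    · exact hcontact hj0.ne'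
  · rintro ⟨hj, hcontact, hlast⟩
    exact ⟨by omega, fun _ => hcontact, fun k hjk hk => (hlast k hjk (by omega)).ne'⟩

section Shift

variable {T}

def lengthenColsAfter (j : ℕ) (h : T.shape.colLen (j + 1) < T.shape.colLen j) :
    TreeLikeTableau :=
  T.withColLens (fun k => if j < k then T.shape.colLen k + 1 else T.shape.colLen k)
    (fun a b hab => by
      have := T.shape.colLen_anti a b hab
      dsimp only
      split_ifs with hb ha ha
      · omega
      · have := T.shape.colLen_anti (j + 1) b hb
        have := T.shape.colLen_anti a j (not_lt.1 ha)
        omega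
      · omega
      · exact this)
    (by simp [T.colLen_zero])
    (fun k => by
      have := T.minColLen_le_colLen k
      split_ifs <;> omega)

def shortenColsAfter (j : ℕ)
    (h : ∀ k, j < k → k < numCols T.points → minColLen T.points k < T.shape.colLen k) :
    TreeLikeTableau :=
  T.withColLens (fun k => if j < k then T.shape.colLen k - 1 else T.shape.colLen k)
    (fun a b hab => by
      have := T.shape.colLen_anti a b hab
      dsimp only
      split_ifs <;> omega)
    (by simp [T.colLen_zero])
    (fun k => by
      have := T.minColLen_le_colLen k
      split_ifs with hjk
      · rcases lt_or_ge k (numCols T.points) with hk | hk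
        · have := h k hjk hk
          omega
        · rw [minColLen_eq_zero hk]
          exact Nat.zero_le _
      · exact this)

@[simp]
theorem points_lengthenColsAfter {h} : (T.lengthenColsAfter j h).points = T.points :=
  rfl

@[simp]
theorem points_shortenColsAfter {h} : (T.shortenColsAfter j h).points = T.points :=
  rfl

theorem colLen_lengthenColsAfter {h} (hk : k < numCols T.points) :
    (T.lengthenColsAfter j h).shape.colLen k =
      if j < k then T.shape.colLen k + 1 else T.shape.colLen k :=
  T.colLen_withColLens hk

theorem colLen_shortenColsAfter {h} (hk : k < numCols T.points) :
    (T.shortenColsAfter j h).shape.colLen k =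
      if j < k then T.shape.colLen k - 1 else T.shape.colLen k :=
  T.colLen_withColLens hk

theorem lastContactCol_lengthenColsAfter {h} (hj : j ∈ T.occCornerCols) :
    (T.lengthenColsAfter j h).lastContactCol = j := by
  have hjn := T.lt_numCols_of_mem_occCornerCols hj
  refine (lastContactCol_eq_iff _).2 ⟨hjn, ?_, fun k hjk hk => ?_⟩
  · rw [colLen_lengthenColsAfter hjn, if_neg (lt_irrefl j)]
    exact (T.mem_occCornerCols_iff.1 hj).1
  · rw [points_lengthenColsAfter] at hk ⊢
    rw [colLen_lengthenColsAfter hk, if_pos hjk]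
    exact Nat.lt_succ_of_le (T.minColLen_le_colLen k)

theorem mem_occCornerCols_shortenColsAfter {h} (hj : T.lastContactCol = j) :
    j ∈ (T.shortenColsAfter j h).occCornerCols := by
  obtain ⟨hjn, hcontact, hlast⟩ := T.lastContactCol_eq_iff.1 hj
  refine (mem_occCornerCols_iff _).2 ⟨?_, ?_⟩ <;> simp only [points_shortenColsAfter]
  · rw [colLen_shortenColsAfter hjn, if_neg (lt_irrefl j), hcontact]
  · rcases lt_or_ge (j + 1) (numCols T.points) with hj1 | hj1
    · have := hlast (j + 1) j.lt_succ_self hj1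
      have := T.shape.colLen_anti j (j + 1) j.le_succ
      rw [colLen_shortenColsAfter hj1, if_pos j.lt_succ_self]
      omega
    · rw [(T.shortenColsAfter j h).colLen_eq_zero hj1]
      exact minColLen_pos hjn

theorem shortenColsAfter_lengthenColsAfter {h h'} :
    (T.lengthenColsAfter j h).shortenColsAfter j h' = T :=
  ext_of_colLen rfl fun k hk => by
    simp only [points_shortenColsAfter, points_lengthenColsAfter] at hk
    rw [colLen_shortenColsAfter (T := T.lengthenColsAfter j h) hk, colLen_lengthenColsAfter hk]
    split_ifs <;> rfl

theorem lengthenColsAfter_shortenColsAfter {h h'} :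
    (T.shortenColsAfter j h).lengthenColsAfter j h' = T :=
  ext_of_colLen rfl fun k hk => by
    simp only [points_shortenColsAfter, points_lengthenColsAfter] at hk
    rw [colLen_lengthenColsAfter (T := T.shortenColsAfter j h) hk, colLen_shortenColsAfter hk]
    split_ifs with hjk
    · have := h k hjk hk
      omega
    · rfl

end Shift

theorem card_filter_mem_occCornerCols_eq {pts : Finset (ℕ × ℕ)} {S : Finset TreeLikeTableau}
    (hS : ∀ T, T ∈ S ↔ T.points = pts) :
    #{T ∈ S | j ∈ T.occCornerCols} = #{T ∈ S | T.lastContactCol = j} := by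
  refine card_bij'
    (fun T hT => T.lengthenColsAfter j <| by
      obtain ⟨hcontact, hsucc⟩ := T.mem_occCornerCols_iff.1 (mem_filter.1 hT).2
      exact hcontact ▸ hsucc)
    (fun T hT => T.shortenColsAfter j (T.lastContactCol_eq_iff.1 (mem_filter.1 hT).2).2.2)
    (fun T hT => ?_) (fun T hT => ?_)
    (fun _ _ => shortenColsAfter_lengthenColsAfter) (fun _ _ => lengthenColsAfter_shortenColsAfter)
  · obtain ⟨hTS, hj⟩ := mem_filter.1 hT
    exact mem_filter.2 ⟨(hS _).2 ((hS T).1 hTS), lastContactCol_lengthenColsAfter hj⟩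
  · obtain ⟨hTS, hj⟩ := mem_filter.1 hT
    exact mem_filter.2 ⟨(hS _).2 ((hS T).1 hTS), mem_occCornerCols_shortenColsAfter hj⟩

end TreeLikeTableau

open TreeLikeTableau

/-- In every non-ambiguous class of tree-like tableaux (the set of tableaux
whose points are arranged identically, i.e. having a given point set `pts`),
the total number of occupied corners over the class equals the cardinality of
the class. -/
theorem occupied_corners_non_ambiguous_class (pts : Finset (ℕ × ℕ))
    (S : Finset TreeLikeTableau) (hS : ∀ T, T ∈ S ↔ T.points = pts) :
    ∑ T ∈ S, T.oc = S.card := by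
  calc ∑ T ∈ S, T.oc
      = ∑ T ∈ S, #((range (numCols pts)).bipartiteAbove (fun T j => j ∈ T.occCornerCols) T) :=
        sum_congr rfl fun T hT => by rw [bipartiteAbove, ← (hS T).1 hT, oc_eq_card_filter]
    _ = ∑ j ∈ range (numCols pts), #(S.bipartiteBelow (fun T j => j ∈ T.occCornerCols) j) :=
        sum_card_bipartiteAbove_eq_sum_card_bipartiteBelow _
    _ = ∑ j ∈ range (numCols pts), #{T ∈ S | T.lastContactCol = j} :=
        sum_congr rfl fun _ _ => card_filter_mem_occCornerCols_eq hS
    _ = #S := (card_eq_sum_card_fiberwise fun T hT =>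
        mem_range.2 ((hS T).1 hT ▸ T.lastContactCol_lt)).symm
end

section
/- For a state s of the PASEP of size n with γ = δ = 0, let X(s) be the number of locations where a particle may jump (right or left). If T is any tree-like tableau of size n+1 projecting to s, then X(s) = 2c(T) − 1, where c(T) is the number of corners of T. -/
open Polynomial

/-- The Southeast border word of a Young diagram, read from the Southwest end
to the Northeast end, with `false` an East step and `true` a North step. -/
def borderWord (D : YoungDiagram) : List Bool :=
  (List.range (D.colLen 0)).reverse.flatMap (fun i =>
    List.replicate (D.rowLen i - D.rowLen (i + 1)) false ++ [true])

/-- The number of corners of a Young diagram: cells whose bottom and right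
edges lie on the Southeast border. -/
def cornersCount (D : YoungDiagram) : ℕ :=
  (D.cells.filter (fun p => (p.1 + 1, p.2) ∉ D.cells ∧ (p.1, p.2 + 1) ∉ D.cells)).card

/-- For a PASEP state `s ∈ {○,●}ⁿ` (with `true` a particle `●` and `false` an
empty site `○`), and boundary rates `γ = δ = 0`, the number of locations where
a particle may jump to the right or to the left: occurrences of `●○` (right
jump), of `○●` (left jump), an `○` at the left end (a particle may enter) and
a `●` at the right end (a particle may exit). -/
def jumpLocations (s : List Bool) : ℕ :=
  ((List.range (s.length - 1)).filter
      (fun i => s.getD i false && !(s.getD (i + 1) true))).length +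
  ((List.range (s.length - 1)).filter
      (fun i => !(s.getD i true) && s.getD (i + 1) false)).length +
  (if s.getD 0 true = false then 1 else 0) +
  (if s.getD (s.length - 1) false = true then 1 else 0)

/-! Read the Southeast border `w` of the shape with `false` for an East step and `true` for a
North step. The state is `w` without its first step (East) and last step (North), complemented.
Padding the state with `●` on the left and `○` on the right turns its four kinds of jump
locations into the `●○` and `○●` factors of the complement of `w`, i.e. the `EN` and `NE`
factors of `w`. The `EN` factors of `w` are the corners, and since `w` starts with `E` and ends
with `N`, it has exactly one `NE` factor fewer. -/

namespace List

variable {α : Type*}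

def adjCount (l : List α) (p : α → α → Bool) : ℕ :=
  (l.zip l.tail).countP fun q => p q.1 q.2

variable (p : α → α → Bool)

@[simp] theorem adjCount_nil : ([] : List α).adjCount p = 0 := rfl

@[simp] theorem adjCount_singleton (x : α) : [x].adjCount p = 0 := rfl

@[simp] theorem adjCount_cons_cons (x y : α) (l : List α) :
    (x :: y :: l).adjCount p = (y :: l).adjCount p + (p x y).toNat := by
  simp [adjCount, countP_cons, Bool.toNat]

theorem adjCount_cons_of_ne_nil (x : α) {l : List α} (hl : l ≠ []) :
    (x :: l).adjCount p = l.adjCount p + (p x (l.head hl)).toNat := by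
  obtain ⟨y, l, rfl⟩ := exists_cons_of_ne_nil hl
  exact adjCount_cons_cons p x y l

theorem adjCount_cons_of_forall_eq_false (x : α) (l : List α) (hx : ∀ y, p x y = false) :
    (x :: l).adjCount p = l.adjCount p := by
  cases l <;> simp [hx]

theorem adjCount_append_cons (u : List α) (x : α) (v : List α) :
    (u ++ x :: v).adjCount p = (u ++ [x]).adjCount p + (x :: v).adjCount p := by
  induction u with
  | nil => simp
  | cons y u ih =>
    cases u with
    | nil => simp [add_comm]
    | cons z u => simp only [cons_append, adjCount_cons_cons] at ih ⊢; omega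

theorem adjCount_concat {l : List α} (hl : l ≠ []) (y : α) :
    (l ++ [y]).adjCount p = l.adjCount p + (p (l.getLast hl) y).toNat := by
  conv_lhs => rw [← dropLast_append_getLast hl, append_assoc, singleton_append,
    adjCount_append_cons, dropLast_append_getLast hl]
  simp

theorem adjCount_map {β : Type*} (f : β → α) (l : List β) :
    (l.map f).adjCount p = l.adjCount fun a b => p (f a) (f b) := by
  simp only [adjCount, ← map_tail, zip_map, countP_map]
  rfl

theorem adjCount_replicate (n : ℕ) (x : α) (hx : p x x = false) :
    (replicate n x).adjCount p = 0 := by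
  induction n with
  | zero => rfl
  | succ n ih => cases n <;> simp_all [replicate_succ]

theorem adjCount_flatMap {β : Type*} (f : β → List α) (x : α) (hx : ∀ y, p x y = false)
    (hf : ∀ b, ∃ u, f b = u ++ [x]) (l : List β) :
    (l.flatMap f).adjCount p = (l.map fun b => (f b).adjCount p).sum := by
  induction l with
  | nil => rfl
  | cons b l ih =>
    obtain ⟨u, hu⟩ := hf b
    rw [flatMap_cons, hu, append_assoc, singleton_append, adjCount_append_cons,
      adjCount_cons_of_forall_eq_false p x _ hx, ih, map_cons, sum_cons, hu]

theorem length_filter_range_getD (d₁ d₂ : α) (l : List α) :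
    ((range (l.length - 1)).filter fun i => p (l.getD i d₁) (l.getD (i + 1) d₂)).length =
      l.adjCount p := by
  induction l with
  | nil => rfl
  | cons x l ih =>
    cases l with
    | nil => rfl
    | cons y l =>
      rw [adjCount_cons_cons, ← ih]
      simp only [length_cons, Nat.add_sub_cancel, range_succ_eq_map, filter_cons, getD_cons_zero,
        getD_cons_succ, filter_map]
      cases p x y <;> simp [Function.comp_def]

theorem adjCount_rise_add_toNat_head (x : Bool) (l : List Bool) :
    (x :: l).adjCount (fun a b => !a && b) + x.toNat =
      (x :: l).adjCount (fun a b => a && !b) + ((x :: l).getLast (cons_ne_nil x l)).toNat := by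
  induction l generalizing x with
  | nil => simp
  | cons y l ih =>
    rw [adjCount_cons_cons, adjCount_cons_cons, getLast_cons_cons]
    have := ih y
    cases x <;> cases y <;> simp at this ⊢ <;> omega

end List

section

open List

theorem jumpLocations_eq_adjCount_pad {s : List Bool} (hs : s ≠ []) :
    jumpLocations s = (true :: s ++ [false]).adjCount (fun a b => a && !b) +
      (true :: s ++ [false]).adjCount (fun a b => !a && b) := by
  have hpad : s ++ [false] ≠ [] := by simp
  have hhead : s.getD 0 true = s.head hs := by
    rw [getD_eq_getElem _ _ (length_pos_iff.2 hs), head_eq_getElem]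
  have hlast : s.getD (s.length - 1) false = s.getLast hs := by
    rw [getD_eq_getElem _ _ (by grind), getLast_eq_getElem]
  rw [jumpLocations, length_filter_range_getD (fun a b => a && !b) false true s,
    length_filter_range_getD (fun a b => !a && b) true false s, hhead, hlast, cons_append,
    adjCount_cons_of_ne_nil _ _ hpad, adjCount_cons_of_ne_nil _ _ hpad, adjCount_concat _ hs,
    adjCount_concat _ hs, head_append_of_ne_nil hs]
  cases s.head hs <;> cases s.getLast hs <;> simp <;> omega

theorem jumpLocations_map_not_drop_dropLast {w : List Bool} (hhead : w.head? = some false)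
    (hlast : w.getLast? = some true) (hlen : 3 ≤ w.length) :
    jumpLocations ((w.drop 1).dropLast.map not) = 2 * w.adjCount (fun a b => !a && b) - 1 := by
  obtain ⟨v, rfl⟩ := getLast?_eq_some_iff.1 hlast
  have hv : v ≠ [] := by rintro rfl; simp at hlen
  obtain ⟨m, rfl⟩ := head?_eq_some_iff.1 (by rwa [head?_append_of_ne_nil _ hv] at hhead)
  have hm : m.map not ≠ [] := by rintro h; simp_all
  have hbalance := adjCount_rise_add_toNat_head false (m ++ [true])
  have hflip : true :: m.map not ++ [false] = (false :: m ++ [true]).map not := by simp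
  rw [cons_append, drop_succ_cons, drop_zero, dropLast_concat, jumpLocations_eq_adjCount_pad hm,
    hflip, adjCount_map, adjCount_map]
  simp only [Bool.not_not, getLast_append_singleton, Bool.toNat_false,
    Bool.toNat_true, ← cons_append] at hbalance ⊢
  omega

end

namespace YoungDiagram

variable (D : YoungDiagram)

theorem cornersCount_eq_card_filter_range :
    cornersCount D =
      ((Finset.range (D.colLen 0)).filter fun i => D.rowLen (i + 1) < D.rowLen i).card := by
  have hrow : ∀ {i}, 0 < D.rowLen i → i < D.colLen 0 := fun h => by
    rwa [← mem_iff_lt_colLen, mem_iff_lt_rowLen]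
  apply Finset.card_nbij' Prod.fst (fun i => (i, D.rowLen i - 1))
  · rintro ⟨i, j⟩ h
    simp only [Finset.coe_filter, mem_cells, mem_iff_lt_rowLen, Set.mem_ofPred_eq] at h ⊢
    exact ⟨Finset.mem_range.2 (hrow (by omega)), by omega⟩
  · intro i h
    simp only [Finset.coe_filter, Finset.mem_range, mem_cells, mem_iff_lt_rowLen,
      Set.mem_ofPred_eq] at h ⊢
    omega
  · rintro ⟨i, j⟩ h
    simp only [Finset.coe_filter, mem_cells, mem_iff_lt_rowLen, Set.mem_ofPred_eq] at h
    simp only [Prod.mk.injEq, true_and]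
    omega
  · intro i _
    rfl

theorem adjCount_borderWord :
    (borderWord D).adjCount (fun a b => !a && b) = cornersCount D := by
  have hblock : ∀ d, (List.replicate d false ++ [true]).adjCount (fun a b => !a && b) =
      if 0 < d then 1 else 0 := by
    rintro (_ | d)
    · rfl
    · rw [List.replicate_succ', List.append_assoc, List.singleton_append,
        List.adjCount_append_cons, ← List.replicate_succ', List.adjCount_replicate _ _ _ rfl]
      rfl
  rw [borderWord, List.adjCount_flatMap _ _ true (fun _ => rfl) (fun _ => ⟨_, rfl⟩),
    List.map_reverse, List.sum_reverse, ← List.sum_toFinset _ List.nodup_range,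
    List.toFinset_range, cornersCount_eq_card_filter_range]
  simp only [hblock, Nat.sub_pos_iff_lt, Finset.sum_boole, Nat.cast_id]

theorem rowLen_colLen_zero : D.rowLen (D.colLen 0) = 0 := by
  by_contra h
  exact (lt_irrefl (D.colLen 0)) (mem_iff_lt_colLen.1 (mem_iff_lt_rowLen.2 (Nat.pos_of_ne_zero h)))

theorem rowLen_pos_of_lt_colLen {i : ℕ} (hi : i < D.colLen 0) : 0 < D.rowLen i :=
  mem_iff_lt_rowLen.1 (mem_iff_lt_colLen.2 hi)

theorem card_cells_le_colLen_mul_rowLen : D.cells.card ≤ D.colLen 0 * D.rowLen 0 := by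
  rw [← Finset.card_range (D.colLen 0), ← Finset.card_range (D.rowLen 0), ← Finset.card_product]
  refine Finset.card_le_card fun ⟨i, j⟩ h => ?_
  rw [mem_cells] at h
  simp only [Finset.mem_product, Finset.mem_range, ← mem_iff_lt_colLen, ← mem_iff_lt_rowLen]
  exact ⟨D.up_left_mem le_rfl (Nat.zero_le j) h, D.up_left_mem (Nat.zero_le i) le_rfl h⟩

theorem head?_borderWord (hD : 0 < D.colLen 0) : (borderWord D).head? = some false := by
  obtain ⟨k, hk⟩ := Nat.exists_eq_add_of_lt hD
  have hpos := D.rowLen_pos_of_lt_colLen (i := k) (by omega)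
  have hout : D.rowLen (k + 1) = 0 := by simpa [hk] using D.rowLen_colLen_zero
  rw [borderWord, hk, zero_add, List.range_succ, List.reverse_append, List.reverse_singleton,
    List.singleton_append, List.flatMap_cons, hout, Nat.sub_zero]
  obtain ⟨d, hd⟩ := Nat.exists_eq_add_of_lt hpos
  simp [hd, List.replicate_succ]

theorem getLast?_borderWord (hD : 0 < D.colLen 0) : (borderWord D).getLast? = some true := by
  obtain ⟨k, hk⟩ := Nat.exists_eq_add_of_lt hD
  simp [borderWord, List.getLast?_flatMap, hk, List.range_succ_eq_map]

theorem length_borderWord : (borderWord D).length = D.colLen 0 + D.rowLen 0 := by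
  suffices ∀ k, ((List.range k).reverse.flatMap fun i =>
      List.replicate (D.rowLen i - D.rowLen (i + 1)) false ++ [true]).length + D.rowLen k =
        k + D.rowLen 0 by
    simpa only [borderWord, D.rowLen_colLen_zero, add_zero] using this (D.colLen 0)
  intro k
  induction k with
  | zero => simp
  | succ k ih =>
    have := D.rowLen_anti k (k + 1) k.le_succ
    simp only [List.range_succ, List.reverse_append, List.reverse_singleton, List.singleton_append,
      List.flatMap_cons, List.length_append, List.length_replicate, List.length_singleton] at ih ⊢
    omega

theorem three_le_length_borderWord (h : 2 ≤ D.cells.card) : 3 ≤ (borderWord D).length := by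
  have hmul := h.trans D.card_cells_le_colLen_mul_rowLen
  rw [length_borderWord]
  generalize D.colLen 0 = k, D.rowLen 0 = r at hmul ⊢
  by_contra! hlt
  have hk : k ≤ 2 := by omega
  have hr : r ≤ 2 := by omega
  interval_cases k <;> interval_cases r <;> omega

end YoungDiagram

/-- If a tree-like tableau `T` of size `n+1` projects to the PASEP state `s`
(the Southeast border word of `T` without its first and last steps, an East
step giving a particle `●` and a North step an empty site `○`), then the
number of locations of `s` where a particle may jump to the right or to the
left is `2c(T) - 1`, where `c(T)` is the number of corners of `T`. -/
theorem jump_locations_eq_two_corners_sub_one (n : ℕ) (hn : 1 ≤ n)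
    (T : TreeLikeTableau) (hT : T.size = n + 1) (s : List Bool)
    (hs : s = (((borderWord T.shape).drop 1).dropLast).map (fun b => !b)) :
    jumpLocations s = 2 * cornersCount T.shape - 1 := by
  have hcard : 2 ≤ T.shape.cells.card := by
    have := Finset.card_le_card T.points_subset
    rw [TreeLikeTableau.size] at hT
    omega
  have hD : 0 < T.shape.colLen 0 := YoungDiagram.mem_iff_lt_colLen.1 (T.points_subset T.root_mem)
  rw [hs, ← T.shape.adjCount_borderWord]
  exact jumpLocations_map_not_drop_dropLast (T.shape.head?_borderWord hD)
    (T.shape.getLast?_borderWord hD) (T.shape.three_le_length_borderWord hcard)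
end
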